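/- arXiv:1812.11558 — 6 statements merged into one kernel-verified Lean document; each statement's English description precedes it below -/
import Mathlib

section
/- Let c ≥ 2 and d ≥ 3 be integers and let H be a finite connected bipartite graph with parts L and R in which every vertex of L has degree c, every vertex of R has degree d, and whose girth is at least 8. Let G be the graph on vertex set L in which two distinct vertices are adjacent iff they have a common neighbor in H. Then (1) G is (c(d−1), d−2)-regular and the link of every vertex of G is a disjoint union of c complete graphs on d−1 vertices each; and (2) if every eigenvalue of the adjacency matrix of H other than ±√(cd) has absolute value at most √(c−1)+√(d−1), then λ₂(G) ≤ d−2+2·√(c(d−1)−(d−2)−1). -/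
open scoped Classical
open Finset Polynomial

noncomputable section

namespace PaperStmt

variable {V : Type}

/-- The degree of a vertex in a finite simple graph. -/
def degR [Fintype V] (G : SimpleGraph V) (v : V) : ℕ :=
  (Finset.univ.filter (fun u => G.Adj v u)).card

/-- The link of a vertex: the subgraph induced on the neighbor set. -/
def link (G : SimpleGraph V) (v : V) : SimpleGraph (G.neighborSet v) :=
  SimpleGraph.induce (G.neighborSet v) G

/-- `G` is `(a,b)`-regular: `a`-regular, and the link of every vertex is `b`-regular. -/
def IsABRegular [Fintype V] (G : SimpleGraph V) (a b : ℕ) : Prop :=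
  (∀ v, degR G v = a) ∧ ∀ v : V, ∀ u : G.neighborSet v, degR (link G v) u = b

/-- The adjacency matrix over `ℝ`. -/
def adjMat [Fintype V] (G : SimpleGraph V) : Matrix V V ℝ :=
  Matrix.of fun u v => if G.Adj u v then (1 : ℝ) else 0

/-- The eigenvalues of the adjacency matrix (with multiplicity), in decreasing order,
so that `λ_k = (eigList G).getD (k-1) 0`. -/
def eigList [Fintype V] [DecidableEq V] (G : SimpleGraph V) : List ℝ :=
  (((adjMat G).charpoly.roots).sort (· ≤ ·)).reverse

/-- `λ₂(G)`, the second largest adjacency eigenvalue. -/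
def lambda2 [Fintype V] [DecidableEq V] (G : SimpleGraph V) : ℝ :=
  (eigList G).getD 1 0

/-- `λ(G) = max_{i ≥ 2} |λ_i(G)|`. -/
def lambdaMax [Fintype V] [DecidableEq V] (G : SimpleGraph V) : ℝ :=
  (((eigList G).drop 1).map (fun x => |x|)).foldr max 0

/-- `H` is a `δ`-edge expander: every vertex set `U` has at least
`δ · min(|U|, |Uᶜ|)` edges to its complement. -/
def IsEdgeExpander [Fintype V] (H : SimpleGraph V) (δ : ℝ) : Prop :=
  ∀ U : Finset V,
    δ * min (U.card : ℝ) (((Finset.univ \ U).card : ℝ)) ≤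
      (((U ×ˢ (Finset.univ \ U)).filter (fun p => H.Adj p.1 p.2)).card : ℝ)

/-- The polygraph `G_S` on `V(G)^m`, `m = |S|`: two tuples are adjacent iff
their multiset of coordinatewise distances equals `S`. -/
def polygraph (G : SimpleGraph V) (S : Multiset ℕ) :
    SimpleGraph (Fin (Multiset.card S) → V) where
  Adj x y := x ≠ y ∧
    Multiset.map (fun i => G.dist (x i) (y i)) (Finset.univ.val) = S
  symm := by
    constructor
    rintro x y ⟨hne, h⟩
    refine ⟨hne.symm, ?_⟩
    have hfun : (fun i => G.dist (y i) (x i)) = fun i => G.dist (x i) (y i) := by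
      funext i; exact SimpleGraph.dist_comm
    rw [hfun]; exact h
  loopless := by constructor; rintro x ⟨h, -⟩; exact h rfl

/-- The number of vertices at distance `l` from a fixed vertex of the `d`-regular tree. -/
def Nd (d l : ℕ) : ℕ := if l = 0 then 1 else d * (d - 1) ^ (l - 1)

/-- The multinomial coefficient `m!/(m₁!⋯m_k!)` attached to a multiset `S` of size `m`
whose distinct values have multiplicities `m₁,…,m_k`. -/
def multinom (S : Multiset ℕ) : ℕ :=
  (Multiset.card S).factorial / ∏ x ∈ S.toFinset, (S.count x).factorial

/-- The Geronimus polynomials (as functions), for parameter `d`. -/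
def geronimus (d : ℕ) : ℕ → ℝ → ℝ
  | 0 => fun _ => 1
  | 1 => fun x => x
  | 2 => fun x => x ^ 2 - d
  | (t + 3) => fun x => x * geronimus d (t + 2) x - ((d : ℝ) - 1) * geronimus d (t + 1) x

/-- The graph on `L` where two distinct vertices are adjacent iff they have a
common neighbor in `H`. -/
def commonNbrGraph {W : Type} (H : SimpleGraph W) (L : Set W) : SimpleGraph L where
  Adj x y := x ≠ y ∧ ∃ w : W, H.Adj x w ∧ H.Adj y w
  symm := by constructor; rintro x y ⟨hne, w, h1, h2⟩; exact ⟨hne.symm, w, h2, h1⟩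
  loopless := by constructor; rintro x ⟨h, -⟩; exact h rfl

/-- `w : ℕ → V` describes a non-backtracking walk of length `t` in `G`
(only the values `w 0, …, w t` matter). -/
def IsNBWalk (G : SimpleGraph V) (t : ℕ) (w : ℕ → V) : Prop :=
  (∀ i < t, G.Adj (w i) (w (i + 1))) ∧ ∀ i, 0 < i → i < t → w (i + 1) ≠ w (i - 1)

/-- The graph `H_t` on `V(G)` where distinct `u, v` are adjacent iff there is a
non-backtracking walk of length `t` from `u` to `v` in `G`. -/
def ntWalkGraph (G : SimpleGraph V) (t : ℕ) : SimpleGraph V :=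
  SimpleGraph.fromRel (fun u v => ∃ w : ℕ → V, w 0 = u ∧ w t = v ∧ IsNBWalk G t w)

/-- The auxiliary graph on the edges of `H`: two distinct edges are adjacent iff
their union spans a triangle of `H`. -/
def auxGraph {X : Type} (H : SimpleGraph X) : SimpleGraph H.edgeSet where
  Adj e f := e ≠ f ∧ ∃ x y z : X, H.Adj x y ∧ H.Adj x z ∧ H.Adj y z ∧
      ((e : Sym2 X) = s(x, y) ∨ (e : Sym2 X) = s(x, z) ∨ (e : Sym2 X) = s(y, z)) ∧
      ((f : Sym2 X) = s(x, y) ∨ (f : Sym2 X) = s(x, z) ∨ (f : Sym2 X) = s(y, z))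
  symm := by
    constructor
    rintro e f ⟨hne, x, y, z, h1, h2, h3, he, hf⟩
    exact ⟨hne.symm, x, y, z, h1, h2, h3, hf, he⟩
  loopless := by constructor; rintro e ⟨h, -⟩; exact h rfl

/-- The ordered triangles of a finite graph. -/
def triangleFinset {X : Type} [Fintype X] (H : SimpleGraph X) : Finset (X × X × X) :=
  Finset.univ.filter (fun t => H.Adj t.1 t.2.1 ∧ H.Adj t.1 t.2.2 ∧ H.Adj t.2.1 t.2.2)

/-- The complete tripartite graph `K_{d,d,d}`. -/
def tripartite (d : ℕ) : SimpleGraph (Fin 3 × Fin d) where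
  Adj u v := u.1 ≠ v.1
  symm := ⟨fun _ _ h => Ne.symm h⟩
  loopless := ⟨fun _ h => h rfl⟩



section Part1

set_option linter.unusedSectionVars false

variable {W : Type} [Fintype W] [DecidableEq W]
variable {H : SimpleGraph W} {L : Set W}

lemma no4 (hgirth : (8 : ℕ∞) ≤ H.egirth) {a b x y : W}
    (hab : a ≠ b) (hxy : x ≠ y) (h1 : H.Adj a x) (h2 : H.Adj x b) (h3 : H.Adj b y)
    (h4 : H.Adj y a) : False := by
  set w : H.Walk a a := .cons h1 (.cons h2 (.cons h3 (.cons h4 .nil))) with hw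
  have n1 := h1.ne; have n2 := h2.ne; have n3 := h3.ne; have n4 := h4.ne
  have n1' := n1.symm; have n2' := n2.symm; have n3' := n3.symm; have n4' := n4.symm
  have hab' := hab.symm; have hxy' := hxy.symm
  have hc : w.IsCycle := by
    simp [hw, SimpleGraph.Walk.isCycle_def, SimpleGraph.Walk.isTrail_def, List.Nodup]
    tauto
  have := SimpleGraph.le_egirth.mp hgirth a w hc
  rw [hw] at this
  simp only [SimpleGraph.Walk.length_cons, SimpleGraph.Walk.length_nil] at this
  norm_num at this

lemma no6 (hgirth : (8 : ℕ∞) ≤ H.egirth)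
    (hbip : ∀ u v : W, H.Adj u v → (u ∈ L ↔ v ∉ L)) {a b e x y z : W}
    (ha : a ∈ L) (hb : b ∈ L) (he : e ∈ L)
    (hab : a ≠ b) (hbe : b ≠ e) (hae : a ≠ e) (hxy : x ≠ y) (hyz : y ≠ z) (hxz : x ≠ z)
    (h1 : H.Adj a x) (h2 : H.Adj x b) (h3 : H.Adj b y) (h4 : H.Adj y e)
    (h5 : H.Adj e z) (h6 : H.Adj z a) : False := by
  have hx : x ∉ L := by have := hbip a x h1; tauto
  have hy : y ∉ L := by have := hbip b y h3; tauto
  have hz : z ∉ L := by have := hbip e z h5; tauto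
  set w : H.Walk a a := .cons h1 (.cons h2 (.cons h3 (.cons h4 (.cons h5 (.cons h6 .nil))))) with hw
  have hxa : x ≠ a := fun h => hx (h ▸ ha)
  have hxb : x ≠ b := fun h => hx (h ▸ hb)
  have hxe : x ≠ e := fun h => hx (h ▸ he)
  have hya : y ≠ a := fun h => hy (h ▸ ha)
  have hyb : y ≠ b := fun h => hy (h ▸ hb)
  have hye : y ≠ e := fun h => hy (h ▸ he)
  have hza : z ≠ a := fun h => hz (h ▸ ha)
  have hzb : z ≠ b := fun h => hz (h ▸ hb)
  have hze : z ≠ e := fun h => hz (h ▸ he)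
  have hc : w.IsCycle := by
    have hab' := hab.symm; have hbe' := hbe.symm; have hae' := hae.symm
    have hxy' := hxy.symm; have hyz' := hyz.symm; have hxz' := hxz.symm
    have hxa' := hxa.symm; have hxb' := hxb.symm; have hxe' := hxe.symm
    have hya' := hya.symm; have hyb' := hyb.symm; have hye' := hye.symm
    have hza' := hza.symm; have hzb' := hzb.symm; have hze' := hze.symm
    simp [hw, SimpleGraph.Walk.isCycle_def, SimpleGraph.Walk.isTrail_def, List.Nodup]
    tauto
  have := SimpleGraph.le_egirth.mp hgirth a w hc
  rw [hw] at this
  simp only [SimpleGraph.Walk.length_cons, SimpleGraph.Walk.length_nil] at this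
  norm_num at this

lemma unique_common (hgirth : (8:ℕ∞) ≤ H.egirth) {u w r r' : W} (hne : u ≠ w)
    (h1 : H.Adj u r) (h2 : H.Adj w r) (h3 : H.Adj u r') (h4 : H.Adj w r') : r = r' := by
  by_contra hrr
  exact no4 hgirth hne hrr h1 h2.symm h4 h3.symm

lemma cng_adj {x y : ↥L} : (commonNbrGraph H L).Adj x y ↔
    x ≠ y ∧ ∃ w, H.Adj ↑x w ∧ H.Adj ↑y w := Iff.rfl

lemma link_adj_val {v : ↥L} {u w : ↥((commonNbrGraph H L).neighborSet v)} :
    (link (commonNbrGraph H L) v).Adj u w ↔ (commonNbrGraph H L).Adj ↑u ↑w := Iff.rfl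

variable (H) in
/-- the common neighbor of `v` and a `G`-neighbor `u` of `v`. -/
noncomputable def cn {L : Set W} (v : ↥L) (u : ↥((commonNbrGraph H L).neighborSet v)) : W :=
  Classical.choose (cng_adj.mp u.2).2

lemma cn_adj_left {v : ↥L} (u : ↥((commonNbrGraph H L).neighborSet v)) :
    H.Adj ↑v (cn H v u) := (Classical.choose_spec (cng_adj.mp u.2).2).1

lemma cn_adj_right {v : ↥L} (u : ↥((commonNbrGraph H L).neighborSet v)) :
    H.Adj ↑↑u (cn H v u) := (Classical.choose_spec (cng_adj.mp u.2).2).2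

lemma cn_unique (hgirth : (8:ℕ∞) ≤ H.egirth) {v : ↥L}
    (u : ↥((commonNbrGraph H L).neighborSet v)) {w : W}
    (hw1 : H.Adj ↑v w) (hw2 : H.Adj ↑↑u w) : cn H v u = w := by
  have hvu : (v : W) ≠ ↑↑u := by
    intro h
    exact ((cng_adj.mp u.2).1 : v ≠ ↑u) (Subtype.ext h)
  exact unique_common hgirth hvu (cn_adj_left u) (cn_adj_right u) hw1 hw2

/-- the fiber equivalence -/
noncomputable def fiberEquiv (hgirth : (8:ℕ∞) ≤ H.egirth)
    (hbip : ∀ u v : W, H.Adj u v → (u ∈ L ↔ v ∉ L))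
    (v : ↥L) {r : W} (hr : H.Adj ↑v r) :
    {u : ↥((commonNbrGraph H L).neighborSet v) // cn H v u = r} ≃
      {w : W // H.Adj r w ∧ w ≠ ↑v} where
  toFun u := ⟨↑↑↑u, by
    constructor
    · have := cn_adj_right u.1
      rw [u.2] at this
      exact this.symm
    · intro h
      exact ((cng_adj.mp u.1.2).1 : v ≠ ↑↑u) (Subtype.ext h.symm)⟩
  invFun w := by
    refine ⟨⟨⟨↑w, ?_⟩, ?_⟩, ?_⟩
    · -- w ∈ L
      have hrL : r ∉ L := (hbip ↑v r hr).mp v.2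
      have := hbip r ↑w w.2.1
      tauto
    · -- membership in neighborSet
      show (commonNbrGraph H L).Adj v _
      rw [cng_adj]
      exact ⟨fun h => w.2.2 (congrArg Subtype.val h).symm, r, hr, w.2.1.symm⟩
    · exact cn_unique hgirth _ hr w.2.1.symm
  left_inv u := by
    ext
    rfl
  right_inv w := by
    ext
    rfl

lemma fiber_card (hgirth : (8:ℕ∞) ≤ H.egirth)
    (hbip : ∀ u v : W, H.Adj u v → (u ∈ L ↔ v ∉ L)) {d : ℕ}
    (hdegR : ∀ v, v ∉ L → degR H v = d)
    (v : ↥L) {r : W} (hr : H.Adj ↑v r) :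
    Fintype.card {u : ↥((commonNbrGraph H L).neighborSet v) // cn H v u = r} = d - 1 := by
  rw [Fintype.card_congr (fiberEquiv hgirth hbip v hr)]
  have hrL : r ∉ L := (hbip ↑v r hr).mp v.2
  rw [Fintype.card_subtype]
  have : Finset.univ.filter (fun w => H.Adj r w ∧ w ≠ ↑v) =
      (Finset.univ.filter (fun w => H.Adj r w)).erase ↑v := by
    ext w
    simp only [Finset.mem_filter, Finset.mem_erase, Finset.mem_univ, true_and]
    tauto
  rw [this, Finset.card_erase_of_mem (by simp [hr.symm]), ← hdegR r hrL]
  rfl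

lemma deg_L (hgirth : (8:ℕ∞) ≤ H.egirth)
    (hbip : ∀ u v : W, H.Adj u v → (u ∈ L ↔ v ∉ L)) {c d : ℕ}
    (hdegL : ∀ v ∈ L, degR H v = c)
    (hdegR : ∀ v, v ∉ L → degR H v = d)
    (v : ↥L) : degR (commonNbrGraph H L) v = c * (d - 1) := by
  have h1 : degR (commonNbrGraph H L) v =
      Fintype.card ↥((commonNbrGraph H L).neighborSet v) := by
    rw [degR, ← Fintype.card_subtype]
    apply Fintype.card_congr
    exact Equiv.subtypeEquivRight (fun _ => Iff.rfl)
  rw [h1]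
  have h2 := Fintype.card_congr
    (Equiv.sigmaFiberEquiv
      (fun u : ↥((commonNbrGraph H L).neighborSet v) =>
        (⟨cn H v u, cn_adj_left u⟩ : {r : W // H.Adj ↑v r})))
  rw [← h2, Fintype.card_sigma]
  have h3 : ∀ r : {r : W // H.Adj ↑v r},
      Fintype.card {u : ↥((commonNbrGraph H L).neighborSet v) //
        (⟨cn H v u, cn_adj_left u⟩ : {r : W // H.Adj ↑v r}) = r} = d - 1 := by
    intro r
    rw [← fiber_card hgirth hbip hdegR v r.2]
    apply Fintype.card_congr
    exact Equiv.subtypeEquivRight (fun u => by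
      constructor
      · intro h; exact congrArg Subtype.val h
      · intro h; exact Subtype.ext h)
  rw [Finset.sum_congr rfl (fun r _ => h3 r), Finset.sum_const, smul_eq_mul]
  congr 1
  rw [Finset.card_univ, Fintype.card_subtype]
  exact hdegL ↑v v.2

lemma link_adj (hgirth : (8:ℕ∞) ≤ H.egirth)
    (hbip : ∀ u v : W, H.Adj u v → (u ∈ L ↔ v ∉ L))
    (v : ↥L) (u w : ↥((commonNbrGraph H L).neighborSet v)) (hne : u ≠ w) :
    (link (commonNbrGraph H L) v).Adj u w ↔ cn H v u = cn H v w := by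
  have huw : (↑↑u : W) ≠ ↑↑w := fun h => hne (Subtype.ext (Subtype.ext h))
  constructor
  · intro hA
    obtain ⟨-, s, hs1, hs2⟩ := cng_adj.mp (link_adj_val.mp hA)
    by_contra hcn
    by_cases hsu : s = cn H v u
    · subst hsu
      exact hcn (cn_unique hgirth w (cn_adj_left u) hs2).symm
    by_cases hsw : s = cn H v w
    · subst hsw
      exact hcn (cn_unique hgirth u (cn_adj_left w) hs1)
    -- 6-cycle
    have hvu : (↑v : W) ≠ ↑↑u := fun h => ((cng_adj.mp u.2).1 : v ≠ ↑u) (Subtype.ext h)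
    have hvw : (↑v : W) ≠ ↑↑w := fun h => ((cng_adj.mp w.2).1 : v ≠ ↑w) (Subtype.ext h)
    exact no6 hgirth hbip v.2 (↑u : ↥L).2 (↑w : ↥L).2 hvu huw hvw
      (fun h => hsu h.symm |>.elim) (fun h => hsw h |>.elim) hcn
      (cn_adj_left u) (cn_adj_right u).symm hs1 hs2.symm
      (cn_adj_right w) (cn_adj_left w).symm
  · intro hcn
    rw [link_adj_val, cng_adj]
    exact ⟨fun h => hne (Subtype.ext h), cn H v u, cn_adj_right u, hcn ▸ cn_adj_right w⟩

lemma link_deg (hgirth : (8:ℕ∞) ≤ H.egirth)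
    (hbip : ∀ u v : W, H.Adj u v → (u ∈ L ↔ v ∉ L)) {d : ℕ}
    (hdegR : ∀ v, v ∉ L → degR H v = d)
    (v : ↥L) (u : ↥((commonNbrGraph H L).neighborSet v)) :
    degR (link (commonNbrGraph H L) v) u = d - 2 := by
  have hiff : ∀ w, (link (commonNbrGraph H L) v).Adj u w ↔
      (w ≠ u ∧ cn H v w = cn H v u) := by
    intro w
    constructor
    · intro h
      have hne : u ≠ w := h.ne
      exact ⟨hne.symm, ((link_adj hgirth hbip v u w hne).mp h).symm⟩
    · intro ⟨h1, h2⟩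
      exact (link_adj hgirth hbip v u w h1.symm).mpr h2.symm
  rw [degR]
  rw [Finset.filter_congr (fun w _ => by rw [hiff w])]
  have : Finset.univ.filter (fun w => w ≠ u ∧ cn H v w = cn H v u) =
      (Finset.univ.filter (fun w => cn H v w = cn H v u)).erase u := by
    ext w
    simp only [Finset.mem_filter, Finset.mem_erase, Finset.mem_univ, true_and]
  rw [this, Finset.card_erase_of_mem (by simp)]
  have h5 : (Finset.univ.filter (fun w => cn H v w = cn H v u)).card = d - 1 := by
    rw [← Fintype.card_subtype]
    exact fiber_card hgirth hbip hdegR v (cn_adj_left u)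
  omega

lemma part1_full (hgirth : (8:ℕ∞) ≤ H.egirth)
    (hbip : ∀ u v : W, H.Adj u v → (u ∈ L ↔ v ∉ L)) {c d : ℕ}
    (hdegL : ∀ v ∈ L, degR H v = c)
    (hdegR : ∀ v, v ∉ L → degR H v = d) :
    IsABRegular (commonNbrGraph H L) (c * (d - 1)) (d - 2) ∧
      ∀ v : L, ∃ f : (commonNbrGraph H L).neighborSet v → Fin c,
        (∀ i : Fin c, Nat.card {u : (commonNbrGraph H L).neighborSet v // f u = i} = d - 1) ∧
        (∀ u w : (commonNbrGraph H L).neighborSet v, u ≠ w →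
          ((link (commonNbrGraph H L) v).Adj u w ↔ f u = f w)) := by
  refine ⟨⟨fun v => deg_L hgirth hbip hdegL hdegR v,
    fun v u => link_deg hgirth hbip hdegR v u⟩, fun v => ?_⟩
  have hcard : Fintype.card {r : W // H.Adj ↑v r} = c := by
    rw [Fintype.card_subtype]
    exact hdegL ↑v v.2
  let e := Fintype.equivFinOfCardEq hcard
  refine ⟨fun u => e ⟨cn H v u, cn_adj_left u⟩, fun i => ?_, fun u w hne => ?_⟩
  · rw [Nat.card_eq_fintype_card]
    have hiff : ∀ u : ↥((commonNbrGraph H L).neighborSet v),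
        e ⟨cn H v u, cn_adj_left u⟩ = i ↔ cn H v u = ↑(e.symm i) := by
      intro u
      rw [Equiv.apply_eq_iff_eq_symm_apply, Subtype.ext_iff]
    rw [Fintype.card_congr (Equiv.subtypeEquivRight hiff)]
    exact fiber_card hgirth hbip hdegR v (e.symm i).2
  · rw [link_adj hgirth hbip v u w hne]
    constructor
    · intro h; exact congrArg e (Subtype.ext h)
    · intro h; exact Subtype.ext_iff.mp (e.injective h)

end Part1

section Spectral
set_option linter.unusedSectionVars false

open Matrix

variable {n : Type} [Fintype n] [DecidableEq n]

lemma charpoly_conj_eq {P Q M : Matrix n n ℝ} (hPQ : P * Q = 1) (hQP : Q * P = 1) :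
    (Q * M * P).charpoly = M.charpoly := by
  have hscal : Matrix.scalar n (X : ℝ[X]) = (X : ℝ[X]) • (1 : Matrix n n ℝ[X]) := by
    ext i j
    by_cases h : i = j <;>
      simp [Matrix.scalar_apply, Matrix.one_apply, Matrix.diagonal_apply, h]
  have key : (Q * M * P).charmatrix =
      (Q.map C) * M.charmatrix * (P.map C) := by
    rw [Matrix.charmatrix, Matrix.charmatrix]
    simp only [RingHom.mapMatrix_apply]
    rw [Matrix.mul_sub, Matrix.sub_mul]
    congr 1
    · rw [hscal, Matrix.mul_smul, Matrix.mul_one, Matrix.smul_mul, ← Matrix.map_mul, hQP,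
        Matrix.map_one _ (map_zero C) (map_one C)]
    · rw [← Matrix.map_mul, ← Matrix.map_mul]
  rw [Matrix.charpoly, Matrix.charpoly, key, Matrix.det_mul, Matrix.det_mul]
  have h1 : (Q.map C).det * (P.map C).det = 1 := by
    rw [mul_comm, ← Matrix.det_mul, ← Matrix.map_mul, hPQ,
      Matrix.map_one _ (map_zero C) (map_one C), Matrix.det_one]
  calc (Q.map C).det * M.charmatrix.det * (P.map C).det
      = M.charmatrix.det * ((Q.map C).det * (P.map C).det) := by ring
    _ = M.charmatrix.det := by rw [h1, mul_one]

lemma charpoly_diagonal_real (f : n → ℝ) :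
    (Matrix.diagonal f).charpoly = ∏ i, (X - C (f i)) := by
  rw [Matrix.charpoly]
  have : (Matrix.diagonal f).charmatrix = Matrix.diagonal (fun i => X - C (f i)) := by
    ext i j
    by_cases h : i = j
    · subst h; simp
    · simp [Matrix.charmatrix_apply_ne _ _ _ h, Matrix.diagonal_apply_ne _ h]
  rw [this, Matrix.det_diagonal]

lemma roots_charpoly_isHermitian {M : Matrix n n ℝ} (hM : M.IsHermitian) :
    M.charpoly.roots = Multiset.map hM.eigenvalues Finset.univ.val := by
  have hdiag : (star hM.eigenvectorUnitary : Matrix n n ℝ) * M * (hM.eigenvectorUnitary : Matrix n n ℝ) =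
      Matrix.diagonal (RCLike.ofReal ∘ hM.eigenvalues) := by
    have := hM.conjStarAlgAut_star_eigenvectorUnitary
    rwa [Unitary.conjStarAlgAut_star_apply] at this
  have hU1 : (hM.eigenvectorUnitary : Matrix n n ℝ) * (star hM.eigenvectorUnitary : Matrix n n ℝ) = 1 := by
    exact_mod_cast (Matrix.mem_unitaryGroup_iff.mp hM.eigenvectorUnitary.2)
  have hU2 : (star hM.eigenvectorUnitary : Matrix n n ℝ) * (hM.eigenvectorUnitary : Matrix n n ℝ) = 1 := by
    exact_mod_cast (Matrix.mem_unitaryGroup_iff'.mp hM.eigenvectorUnitary.2)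
  have h1 : M.charpoly = (Matrix.diagonal (RCLike.ofReal ∘ hM.eigenvalues) : Matrix n n ℝ).charpoly := by
    rw [← hdiag]
    exact (charpoly_conj_eq hU1 hU2).symm
  have h2 : (RCLike.ofReal ∘ hM.eigenvalues : n → ℝ) = hM.eigenvalues := by
    funext i; simp [RCLike.ofReal]
  rw [h1, h2, charpoly_diagonal_real]
  have h3 : ∏ i, (X - C (hM.eigenvalues i)) =
      (Multiset.map (fun a => X - C a) (Multiset.map hM.eigenvalues Finset.univ.val)).prod := by
    rw [Multiset.map_map]
    rfl
  rw [h3, roots_multiset_prod_X_sub_C]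

lemma mem_roots_charpoly_of_eigen {M : Matrix n n ℝ} {z : n → ℝ} (hz : z ≠ 0) {ρ : ℝ}
    (h : M.mulVec z = ρ • z) : ρ ∈ M.charpoly.roots := by
  rw [Polynomial.mem_roots']
  refine ⟨(Matrix.charpoly_monic M).ne_zero, ?_⟩
  have heval : M.charpoly.eval ρ = ((M.charmatrix).map (Polynomial.evalRingHom ρ)).det := by
    rw [Matrix.charpoly, ← Polynomial.coe_evalRingHom, RingHom.map_det]
    rfl
  have hmat : (M.charmatrix).map (Polynomial.evalRingHom ρ) = ρ • (1 : Matrix n n ℝ) - M := by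
    ext i j
    by_cases hij : i = j
    · subst hij
      simp [Matrix.charmatrix_apply_eq, Matrix.one_apply]
    · simp [Matrix.charmatrix_apply_ne _ _ _ hij, Matrix.one_apply_ne hij]
  have hdet : (ρ • (1 : Matrix n n ℝ) - M).det = 0 := by
    rw [← Matrix.exists_mulVec_eq_zero_iff]
    refine ⟨z, hz, ?_⟩
    rw [Matrix.sub_mulVec, Matrix.smul_mulVec, Matrix.one_mulVec, h, sub_self]
  unfold Polynomial.IsRoot
  rw [heval, hmat, hdet]

end Spectral

section Lambda2
set_option linter.unusedSectionVars false

variable {V : Type} [Fintype V] [DecidableEq V]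

lemma lambda2_le_of_few (G : SimpleGraph V) {β : ℝ} (hβ : 0 ≤ β)
    (hcount : ((adjMat G).charpoly.roots.filter (fun x => β < x)).card ≤ 1) :
    lambda2 G ≤ β := by
  unfold lambda2 eigList
  have hsorted : ((adjMat G).charpoly.roots.sort (· ≤ ·)).Pairwise (· ≤ ·) :=
    Multiset.pairwise_sort _ _
  have hperm : ((adjMat G).charpoly.roots.sort (· ≤ ·) : Multiset ℝ) =
      (adjMat G).charpoly.roots := Multiset.sort_eq _ _
  rcases hr : ((adjMat G).charpoly.roots.sort (· ≤ ·)).reverse with _ | ⟨a, tl0⟩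
  · simpa using hβ
  rcases tl0 with _ | ⟨b, tl⟩
  · simpa using hβ
  simp only [List.getD_cons_succ, List.getD_cons_zero]
  by_contra hb
  push_neg at hb
  have hpair : ((adjMat G).charpoly.roots.sort (· ≤ ·)).reverse.Pairwise
      (fun x y => y ≤ x) := by
    rw [List.pairwise_reverse]
    exact hsorted
  rw [hr] at hpair
  have hba : b ≤ a := (List.pairwise_cons.mp hpair).1 b (by simp)
  have ha : β < a := lt_of_lt_of_le hb hba
  have hcnt : 2 ≤ ((adjMat G).charpoly.roots.filter (fun x => β < x)).card := by
    have : (adjMat G).charpoly.roots =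
        ((a :: b :: tl : List ℝ) : Multiset ℝ) := by
      rw [← hperm, ← hr]
      exact (Multiset.coe_reverse _).symm
    rw [this]
    rw [Multiset.filter_coe, Multiset.coe_card]
    simp only [List.filter_cons, decide_eq_true_eq, if_pos ha, if_pos hb]
    simp
  omega
end Lambda2

section Part2
set_option linter.unusedSectionVars false

variable {W : Type} [Fintype W] [DecidableEq W]
variable {H : SimpleGraph W} {L : Set W} {c d : ℕ}

lemma adjMat_isHermitian {V : Type} [Fintype V] (G : SimpleGraph V) :
    (adjMat G).IsHermitian := by
  unfold Matrix.IsHermitian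
  ext i j
  simp only [Matrix.conjTranspose_apply, adjMat, Matrix.of_apply, star_trivial]
  rw [SimpleGraph.adj_comm]

lemma adjMat_apply {V : Type} [Fintype V] (G : SimpleGraph V) (u v : V) :
    adjMat G u v = if G.Adj u v then (1:ℝ) else 0 := rfl

/-- the Perron eigenvector of a biregular bipartite graph -/
def pvec (L : Set W) (c d : ℕ) : W → ℝ :=
  fun w => if w ∈ L then Real.sqrt c else Real.sqrt d

lemma pvec_pos (hc : 2 ≤ c) (hd : 3 ≤ d) (w : W) : 0 < pvec L c d w := by
  unfold pvec
  split <;> (apply Real.sqrt_pos.mpr; positivity)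

lemma mulVec_pvec (hbip : ∀ u v : W, H.Adj u v → (u ∈ L ↔ v ∉ L))
    (hdegL : ∀ v ∈ L, degR H v = c) (hdegR : ∀ v, v ∉ L → degR H v = d)
    (hc : 2 ≤ c) (hd : 3 ≤ d) :
    (adjMat H).mulVec (pvec L c d) = Real.sqrt ((c:ℝ) * d) • pvec L c d := by
  have hc0 : (0:ℝ) ≤ c := by positivity
  have hd0 : (0:ℝ) ≤ d := by positivity
  funext v
  have hrow : ((adjMat H).mulVec (pvec L c d)) v =
      ∑ w ∈ Finset.univ.filter (fun w => H.Adj v w), pvec L c d w := by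
    rw [Matrix.mulVec, dotProduct, Finset.sum_filter]
    congr 1
    funext w
    rw [adjMat_apply]
    split <;> simp
  by_cases hv : v ∈ L
  · have hval : ∀ w ∈ Finset.univ.filter (fun w => H.Adj v w),
        pvec L c d w = Real.sqrt d := by
      intro w hw
      rw [Finset.mem_filter] at hw
      have : w ∉ L := (hbip v w hw.2).mp hv
      simp [pvec, this]
    rw [hrow, Finset.sum_congr rfl hval, Finset.sum_const, nsmul_eq_mul]
    have hcard : (Finset.univ.filter (fun w => H.Adj v w)).card = c := hdegL v hv
    rw [hcard]
    show (c:ℝ) * Real.sqrt d = Real.sqrt ((c:ℝ)*d) • pvec L c d v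
    simp only [pvec, if_pos hv, smul_eq_mul]
    rw [Real.sqrt_mul hc0, mul_comm (Real.sqrt c) (Real.sqrt d), mul_assoc,
      Real.mul_self_sqrt hc0, mul_comm (Real.sqrt d) (c:ℝ)]
  · have hval : ∀ w ∈ Finset.univ.filter (fun w => H.Adj v w),
        pvec L c d w = Real.sqrt c := by
      intro w hw
      rw [Finset.mem_filter] at hw
      have hwL : w ∈ L := by
        have := hbip v w hw.2
        tauto
      simp [pvec, hwL]
    rw [hrow, Finset.sum_congr rfl hval, Finset.sum_const, nsmul_eq_mul]
    have hcard : (Finset.univ.filter (fun w => H.Adj v w)).card = d := hdegR v hv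
    rw [hcard]
    show (d:ℝ) * Real.sqrt c = Real.sqrt ((c:ℝ)*d) • pvec L c d v
    simp only [pvec, if_neg hv, smul_eq_mul]
    rw [Real.sqrt_mul hc0, mul_assoc, Real.mul_self_sqrt hd0, mul_comm (Real.sqrt c) _]

lemma perron (hconn : H.Connected) (hbip : ∀ u v : W, H.Adj u v → (u ∈ L ↔ v ∉ L))
    (hdegL : ∀ v ∈ L, degR H v = c) (hdegR : ∀ v, v ∉ L → degR H v = d)
    (hc : 2 ≤ c) (hd : 3 ≤ d)
    {z : W → ℝ} (hz : (adjMat H).mulVec z = Real.sqrt ((c:ℝ) * d) • z) :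
    ∃ t : ℝ, ∀ v, z v = t * pvec L c d v := by
  have hW : Nonempty W := hconn.nonempty
  have hppos := pvec_pos (L := L) hc hd
  obtain ⟨v0, -, hmin⟩ := Finset.exists_min_image Finset.univ
    (fun v => z v / pvec L c d v) ⟨Classical.arbitrary W, Finset.mem_univ _⟩
  set t := z v0 / pvec L c d v0 with ht
  set y := fun v => z v - t * pvec L c d v with hy
  have hy0 : ∀ v, 0 ≤ y v := by
    intro v
    have h1 : t ≤ z v / pvec L c d v := hmin v (Finset.mem_univ v)
    have h2 : t * pvec L c d v ≤ z v := by
      rw [← le_div_iff₀ (hppos v)]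
      exact h1
    simp only [hy]
    linarith
  have hAy : (adjMat H).mulVec y = Real.sqrt ((c:ℝ) * d) • y := by
    have hyz : y = z - t • pvec L c d := by funext v; simp [hy]
    rw [hyz, Matrix.mulVec_sub, Matrix.mulVec_smul, hz,
      mulVec_pvec hbip hdegL hdegR hc hd, smul_sub, smul_comm]
  have hclosed : ∀ v, y v = 0 → ∀ u, H.Adj v u → y u = 0 := by
    intro v hv u hu
    have hrow : ((adjMat H).mulVec y) v = ∑ w, (if H.Adj v w then y w else 0) := by
      rw [Matrix.mulVec, dotProduct]
      congr 1
      funext w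
      rw [adjMat_apply]
      split <;> simp
    have hzero : ∑ w, (if H.Adj v w then y w else 0) = 0 := by
      rw [← hrow, hAy]
      simp [hv]
    have := (Finset.sum_eq_zero_iff_of_nonneg (fun w _ => by
      split
      · exact hy0 w
      · exact le_refl 0)).mp hzero u (Finset.mem_univ u)
    rwa [if_pos hu] at this
  have hyv0 : y v0 = 0 := by
    simp only [hy, ht]
    rw [div_mul_cancel₀ _ (ne_of_gt (hppos v0))]
    ring
  have haux : ∀ (a b : W) (w : H.Walk a b), y a = 0 → y b = 0 := by
    intro a b w
    induction w with
    | nil => exact id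
    | cons h q ih => exact fun ha => ih (hclosed _ ha _ h)
  have hally : ∀ v, y v = 0 := fun v => haux v0 v (hconn v0 v).some hyv0
  refine ⟨t, fun v => ?_⟩
  have := hally v
  simp only [hy] at this
  linarith

lemma A2_entry (hgirth : (8:ℕ∞) ≤ H.egirth)
    (hdegL : ∀ v ∈ L, degR H v = c) (u v : ↥L) :
    (adjMat H * adjMat H) ↑u ↑v =
      if u = v then (c:ℝ) else adjMat (commonNbrGraph H L) u v := by
  have hmul : (adjMat H * adjMat H) ↑u ↑v =
      ((Finset.univ.filter (fun w => H.Adj ↑u w ∧ H.Adj ↑v w)).card : ℝ) := by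
    rw [Matrix.mul_apply, ← Finset.sum_boole]
    apply Finset.sum_congr rfl
    intro w _
    rw [adjMat_apply, adjMat_apply, H.adj_comm w (↑v : W)]
    by_cases h1 : H.Adj ↑u w <;> by_cases h2 : H.Adj ↑v w <;> simp [h1, h2]
  rw [hmul]
  by_cases huv : u = v
  · subst huv
    rw [if_pos rfl]
    have : Finset.univ.filter (fun w => H.Adj ↑u w ∧ H.Adj ↑u w) =
        Finset.univ.filter (fun w => H.Adj ↑u w) := by
      apply Finset.filter_congr
      intro w _
      simp
    rw [this]
    norm_cast
    exact hdegL ↑u u.2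
  · rw [if_neg huv, adjMat_apply]
    have hvalne : (↑u : W) ≠ ↑v := fun h => huv (Subtype.ext h)
    by_cases hadj : (commonNbrGraph H L).Adj u v
    · obtain ⟨-, s, hs1, hs2⟩ := cng_adj.mp hadj
      have : Finset.univ.filter (fun w => H.Adj ↑u w ∧ H.Adj ↑v w) = {s} := by
        ext w
        simp only [Finset.mem_filter, Finset.mem_univ, true_and, Finset.mem_singleton]
        constructor
        · intro ⟨h1, h2⟩
          exact unique_common hgirth hvalne h1 h2 hs1 hs2
        · rintro rfl
          exact ⟨hs1, hs2⟩
      rw [this, if_pos hadj]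
      simp
    · have : Finset.univ.filter (fun w => H.Adj ↑u w ∧ H.Adj ↑v w) = ∅ := by
        ext w
        simp only [Finset.mem_filter, Finset.mem_univ, true_and, Finset.notMem_empty,
          iff_false]
        intro ⟨h1, h2⟩
        exact hadj (cng_adj.mpr ⟨huv, w, h1, h2⟩)
      rw [this, if_neg hadj]
      simp

lemma sumA2 (hgirth : (8:ℕ∞) ≤ H.egirth)
    (hdegL : ∀ v ∈ L, degR H v = c) (x : ↥L → ℝ) (v : ↥L) :
    ∑ u : ↥L, (adjMat H * adjMat H) ↑v ↑u * x u
      = (c:ℝ) * x v + ((adjMat (commonNbrGraph H L)).mulVec x) v := by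
  have hterm : ∀ u : ↥L, (adjMat H * adjMat H) ↑v ↑u * x u =
      adjMat (commonNbrGraph H L) v u * x u + (if v = u then (c:ℝ) * x u else 0) := by
    intro u
    rw [A2_entry hgirth hdegL v u]
    by_cases h : v = u
    · subst h
      rw [if_pos rfl, if_pos rfl, adjMat_apply, if_neg (SimpleGraph.irrefl _)]
      ring
    · rw [if_neg h, if_neg h, add_zero]
  rw [Finset.sum_congr rfl (fun u _ => hterm u), Finset.sum_add_distrib,
    Finset.sum_ite_eq Finset.univ v (fun u => (c:ℝ) * x u), if_pos (Finset.mem_univ v)]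
  rw [Matrix.mulVec, dotProduct]
  ring

lemma lift_eigen (hbip : ∀ u v : W, H.Adj u v → (u ∈ L ↔ v ∉ L))
    {x : ↥L → ℝ} (hx : x ≠ 0) {ρ : ℝ} (hρ : 0 < ρ)
    (h2 : ∀ v : ↥L, ∑ u : ↥L, (adjMat H * adjMat H) ↑v ↑u * x u = ρ^2 * x v) :
    ∃ z : W → ℝ, z ≠ 0 ∧ (adjMat H).mulVec z = ρ • z ∧ ∀ v : ↥L, z ↑v = x v := by
  set z : W → ℝ := fun w =>
    if h : w ∈ L then x ⟨w, h⟩ else ρ⁻¹ * ∑ u : ↥L, adjMat H w ↑u * x u with hzdef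
  have hres : ∀ v : ↥L, z ↑v = x v := by
    intro v
    simp only [hzdef]
    rw [dif_pos v.2]
  have hzne : z ≠ 0 := by
    intro h0
    apply hx
    funext v
    rw [← hres v, h0]
    rfl
  refine ⟨z, hzne, ?_, hres⟩
  funext v
  by_cases hv : v ∈ L
  · have hterm : ∀ w : W, adjMat H v w * z w =
        ρ⁻¹ * (adjMat H v w * ∑ u : ↥L, adjMat H w ↑u * x u) := by
      intro w
      by_cases hw : w ∈ L
      · have hA0 : adjMat H v w = 0 := by
          rw [adjMat_apply, if_neg]
          intro hadj
          exact ((hbip v w hadj).mp hv) hw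
        rw [hA0]
        ring
      · simp only [hzdef]
        rw [dif_neg hw]
        ring
    have lhs : ((adjMat H).mulVec z) v = ρ * x ⟨v, hv⟩ := by
      calc ((adjMat H).mulVec z) v = ∑ w, adjMat H v w * z w := by
            rw [Matrix.mulVec, dotProduct]
        _ = ∑ w, ρ⁻¹ * (adjMat H v w * ∑ u : ↥L, adjMat H w ↑u * x u) :=
            Finset.sum_congr rfl (fun w _ => hterm w)
        _ = ρ⁻¹ * ∑ u : ↥L, (∑ w, adjMat H v w * adjMat H w ↑u) * x u := by
            rw [← Finset.mul_sum]
            congr 1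
            simp_rw [Finset.mul_sum]
            rw [Finset.sum_comm]
            apply Finset.sum_congr rfl
            intro u _
            rw [Finset.sum_mul]
            apply Finset.sum_congr rfl
            intro w _
            ring
        _ = ρ⁻¹ * ∑ u : ↥L, (adjMat H * adjMat H) ↑(⟨v, hv⟩ : ↥L) ↑u * x u := by
            simp_rw [Matrix.mul_apply]
        _ = ρ⁻¹ * (ρ^2 * x ⟨v, hv⟩) := by rw [h2 ⟨v, hv⟩]
        _ = ρ * x ⟨v, hv⟩ := by
            rw [pow_two, show ρ⁻¹ * (ρ * ρ * x ⟨v, hv⟩) = (ρ⁻¹ * ρ) * (ρ * x ⟨v, hv⟩) by ring,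
              inv_mul_cancel₀ (ne_of_gt hρ), one_mul]
    rw [lhs]
    show _ = ρ * z v
    rw [show z v = x ⟨v, hv⟩ from hres ⟨v, hv⟩]
  · have hterm : ∀ w : W, adjMat H v w * z w =
        (if hw : w ∈ L then adjMat H v w * x ⟨w, hw⟩ else 0) := by
      intro w
      by_cases hw : w ∈ L
      · rw [dif_pos hw]
        simp only [hzdef]
        rw [dif_pos hw]
      · rw [dif_neg hw]
        have hA0 : adjMat H v w = 0 := by
          rw [adjMat_apply, if_neg]
          intro hadj
          have := hbip v w hadj
          tauto
        rw [hA0, zero_mul]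
    have lhs : ((adjMat H).mulVec z) v = ∑ u : ↥L, adjMat H v ↑u * x u := by
      calc ((adjMat H).mulVec z) v = ∑ w, adjMat H v w * z w := by
            rw [Matrix.mulVec, dotProduct]
        _ = ∑ w, (if hw : w ∈ L then adjMat H v w * x ⟨w, hw⟩ else 0) :=
            Finset.sum_congr rfl (fun w _ => hterm w)
        _ = ∑ w ∈ L.toFinset, (if hw : w ∈ L then adjMat H v w * x ⟨w, hw⟩ else 0) := by
            symm
            apply Finset.sum_subset (Finset.subset_univ _)
            intro w _ hw
            rw [dif_neg (fun h => hw (Set.mem_toFinset.mpr h))]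
        _ = ∑ u : ↥L, adjMat H v ↑u * x u := by
            rw [Finset.sum_subtype L.toFinset (fun w => Set.mem_toFinset)]
            apply Finset.sum_congr rfl
            intro u _
            rw [dif_pos u.2]
    rw [lhs]
    show _ = ρ * z v
    simp only [hzdef]
    rw [dif_neg hv, ← mul_assoc, mul_inv_cancel₀ (ne_of_gt hρ), one_mul]

lemma L_nonempty (hconn : H.Connected) (hbip : ∀ u v : W, H.Adj u v → (u ∈ L ↔ v ∉ L))
    (hdegR : ∀ v, v ∉ L → degR H v = d) (hd : 3 ≤ d) : Nonempty ↥L := by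
  have hW : Nonempty W := hconn.nonempty
  obtain ⟨w0⟩ := hW
  by_cases h : w0 ∈ L
  · exact ⟨⟨w0, h⟩⟩
  · have hdeg : degR H w0 = d := hdegR w0 h
    have hpos : 0 < (Finset.univ.filter (fun u => H.Adj w0 u)).card := by
      rw [show (Finset.univ.filter (fun u => H.Adj w0 u)).card = degR H w0 from rfl, hdeg]
      omega
    obtain ⟨u, hu⟩ := Finset.card_pos.mp hpos
    rw [Finset.mem_filter] at hu
    have : u ∈ L := by
      have := hbip w0 u hu.2
      tauto
    exact ⟨⟨u, this⟩⟩

lemma part2_full (hc : 2 ≤ c) (hd : 3 ≤ d) (hconn : H.Connected)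
    (hbip : ∀ u v : W, H.Adj u v → (u ∈ L ↔ v ∉ L))
    (hdegL : ∀ v ∈ L, degR H v = c) (hdegR : ∀ v, v ∉ L → degR H v = d)
    (hgirth : (8 : ℕ∞) ≤ H.egirth)
    (hfew : ∀ μ ∈ (adjMat H).charpoly.roots,
        μ ≠ Real.sqrt ((c : ℝ) * d) → μ ≠ -Real.sqrt ((c : ℝ) * d) →
        |μ| ≤ Real.sqrt ((c : ℝ) - 1) + Real.sqrt ((d : ℝ) - 1)) :
    lambda2 (commonNbrGraph H L) ≤
      (d : ℝ) - 2 + 2 * Real.sqrt ((c : ℝ) * ((d : ℝ) - 1) - ((d : ℝ) - 2) - 1) := by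
  have harg : (c : ℝ) * ((d : ℝ) - 1) - ((d : ℝ) - 2) - 1 = ((c:ℝ)-1) * ((d:ℝ)-1) := by ring
  rw [harg]
  have hc1 : (2:ℝ) ≤ (c:ℝ) := by exact_mod_cast hc
  have hd1 : (3:ℝ) ≤ (d:ℝ) := by exact_mod_cast hd
  set β := (d : ℝ) - 2 + 2 * Real.sqrt (((c:ℝ)-1) * ((d:ℝ)-1)) with hβdef
  have hsq : Real.sqrt (((c:ℝ)-1) * ((d:ℝ)-1)) ^ 2 = ((c:ℝ)-1) * ((d:ℝ)-1) :=
    Real.sq_sqrt (by nlinarith)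
  have hβ0 : 0 ≤ β := by
    have := Real.sqrt_nonneg (((c:ℝ)-1) * ((d:ℝ)-1))
    simp only [hβdef]
    linarith
  apply lambda2_le_of_few _ hβ0
  set M := adjMat (commonNbrGraph H L) with hMdef
  have hM : M.IsHermitian := adjMat_isHermitian _
  rw [roots_charpoly_isHermitian hM, Multiset.filter_map, Multiset.card_map]
  have hLne : Nonempty ↥L := L_nonempty hconn hbip hdegR hd
  -- key claim for large eigenvalues
  have claim : ∀ i : ↥L, β < hM.eigenvalues i →
      ∃ t : ℝ, t ≠ 0 ∧ ∀ v : ↥L,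
        (WithLp.equiv 2 _) (hM.eigenvectorBasis i) v = t * pvec L c d ↑v := by
    intro i hi
    set x : ↥L → ℝ := (WithLp.equiv 2 _) (hM.eigenvectorBasis i) with hxdef
    have hMx : M.mulVec x = hM.eigenvalues i • x := hM.mulVec_eigenvectorBasis i
    have hxne : x ≠ 0 := by
      intro h0
      apply hM.eigenvectorBasis.toBasis.ne_zero i
      rw [OrthonormalBasis.coe_toBasis]
      have := congrArg (WithLp.equiv 2 (↥L → ℝ)).symm (hxdef ▸ h0)
      rw [Equiv.symm_apply_apply] at this
      rw [this]
      rfl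
    have hclam : (0:ℝ) < (c:ℝ) + hM.eigenvalues i := by linarith
    set ρ := Real.sqrt ((c:ℝ) + hM.eigenvalues i) with hρdef
    have hρpos : 0 < ρ := Real.sqrt_pos.mpr hclam
    have hρsq : ρ^2 = (c:ℝ) + hM.eigenvalues i := Real.sq_sqrt (le_of_lt hclam)
    have h2 : ∀ v : ↥L, ∑ u : ↥L, (adjMat H * adjMat H) ↑v ↑u * x u = ρ^2 * x v := by
      intro v
      rw [sumA2 hgirth hdegL x v, ← hMdef, hMx, hρsq]
      simp only [Pi.smul_apply, smul_eq_mul]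
      ring
    obtain ⟨z, hzne, hAz, hzres⟩ := lift_eigen hbip hxne hρpos h2
    have hmem : ρ ∈ (adjMat H).charpoly.roots := mem_roots_charpoly_of_eigen hzne hAz
    have hb0 : (0:ℝ) ≤ Real.sqrt ((c:ℝ)-1) + Real.sqrt ((d:ℝ)-1) := by
      have := Real.sqrt_nonneg ((c:ℝ)-1)
      have := Real.sqrt_nonneg ((d:ℝ)-1)
      linarith
    have hbsq : (Real.sqrt ((c:ℝ)-1) + Real.sqrt ((d:ℝ)-1))^2 = (c:ℝ) + β := by
      have hm : Real.sqrt (((c:ℝ)-1) * ((d:ℝ)-1)) =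
          Real.sqrt ((c:ℝ)-1) * Real.sqrt ((d:ℝ)-1) :=
        Real.sqrt_mul (by linarith) _
      rw [add_sq, Real.sq_sqrt (by linarith : (0:ℝ) ≤ (c:ℝ)-1),
        Real.sq_sqrt (by linarith : (0:ℝ) ≤ (d:ℝ)-1)]
      simp only [hβdef, hm]
      ring
    have hρgt : Real.sqrt ((c:ℝ)-1) + Real.sqrt ((d:ℝ)-1) < ρ := by
      nlinarith [hρsq, hρpos, hb0]
    have hρeq : ρ = Real.sqrt ((c:ℝ) * d) := by
      by_contra hne
      have hρneg : ρ ≠ -Real.sqrt ((c:ℝ) * d) := by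
        have := Real.sqrt_nonneg ((c:ℝ) * d)
        intro h
        rw [h] at hρpos
        linarith
      have := hfew ρ hmem hne hρneg
      rw [abs_of_pos hρpos] at this
      linarith
    rw [hρeq] at hAz
    obtain ⟨t, ht⟩ := perron hconn hbip hdegL hdegR hc hd hAz
    have htx : ∀ v : ↥L, x v = t * pvec L c d ↑v := by
      intro v
      rw [← hzres v, ht ↑v]
    refine ⟨t, ?_, htx⟩
    intro ht0
    apply hxne
    funext v
    rw [htx v, ht0, zero_mul]
    rfl
  -- suppose two large eigenvalues
  rw [show Multiset.card (Multiset.filter ((fun x => β < x) ∘ hM.eigenvalues) Finset.univ.val)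
      = (Finset.univ.filter (fun i => β < hM.eigenvalues i)).card from rfl]
  by_contra hcard
  push_neg at hcard
  obtain ⟨i, hi, j, hj, hij⟩ := Finset.one_lt_card.mp hcard
  rw [Finset.mem_filter] at hi hj
  obtain ⟨ti, hti, hxi⟩ := claim i hi.2
  obtain ⟨tj, htj, hxj⟩ := claim j hj.2
  have horth : (inner ℝ (hM.eigenvectorBasis i) (hM.eigenvectorBasis j) : ℝ) = 0 :=
    hM.eigenvectorBasis.orthonormal.2 hij
  have hinner : (inner ℝ (hM.eigenvectorBasis i) (hM.eigenvectorBasis j) : ℝ) =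
      ∑ v : ↥L, ((WithLp.equiv 2 _) (hM.eigenvectorBasis i) v) *
        ((WithLp.equiv 2 _) (hM.eigenvectorBasis j) v) := by
    rw [PiLp.inner_apply]
    apply Finset.sum_congr rfl
    intro v _
    rw [RCLike.inner_apply', starRingEnd_apply, star_trivial]
    rfl
  have hc0 : (0:ℝ) < c := by linarith
  have hsum : ∑ v : ↥L, ((WithLp.equiv 2 _) (hM.eigenvectorBasis i) v) *
      ((WithLp.equiv 2 _) (hM.eigenvectorBasis j) v)
      = (Fintype.card ↥L : ℝ) * (ti * tj * c) := by
    have hterm : ∀ v : ↥L, ((WithLp.equiv 2 _) (hM.eigenvectorBasis i) v) *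
        ((WithLp.equiv 2 _) (hM.eigenvectorBasis j) v) = ti * tj * c := by
      intro v
      rw [hxi v, hxj v]
      have hp : pvec L c d ↑v = Real.sqrt c := by
        unfold pvec
        rw [if_pos v.2]
      rw [hp]
      have hss : Real.sqrt (c:ℝ) * Real.sqrt (c:ℝ) = (c:ℝ) :=
        Real.mul_self_sqrt (by linarith)
      rw [show ti * Real.sqrt (c:ℝ) * (tj * Real.sqrt (c:ℝ))
          = ti * tj * (Real.sqrt (c:ℝ) * Real.sqrt (c:ℝ)) by ring, hss]
    rw [Finset.sum_congr rfl (fun v _ => hterm v), Finset.sum_const, nsmul_eq_mul,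
      Finset.card_univ]
  rw [hinner, hsum] at horth
  have hcardL : (0:ℝ) < (Fintype.card ↥L : ℝ) := by
    have := Fintype.card_pos_iff.mpr hLne
    exact_mod_cast this
  have : ti * tj * (c:ℝ) ≠ 0 := by
    apply mul_ne_zero (mul_ne_zero hti htj) (ne_of_gt hc0)
  apply this
  have := mul_eq_zero.mp horth
  rcases this with h | h
  · exact absurd h (ne_of_gt hcardL)
  · exact h

end Part2

theorem statement1 {W : Type} [Fintype W] [DecidableEq W] (c d : ℕ) (hc : 2 ≤ c) (hd : 3 ≤ d)
    (H : SimpleGraph W) (L : Set W)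
    (hbip : ∀ u v : W, H.Adj u v → (u ∈ L ↔ v ∉ L))
    (hconn : H.Connected)
    (hdegL : ∀ v ∈ L, degR H v = c)
    (hdegR : ∀ v, v ∉ L → degR H v = d)
    (hgirth : (8 : ℕ∞) ≤ H.egirth) :
    (IsABRegular (commonNbrGraph H L) (c * (d - 1)) (d - 2) ∧
      ∀ v : L, ∃ f : (commonNbrGraph H L).neighborSet v → Fin c,
        (∀ i : Fin c, Nat.card {u : (commonNbrGraph H L).neighborSet v // f u = i} = d - 1) ∧
        (∀ u w : (commonNbrGraph H L).neighborSet v, u ≠ w →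
          ((link (commonNbrGraph H L) v).Adj u w ↔ f u = f w))) ∧
    ((∀ μ ∈ (adjMat H).charpoly.roots,
        μ ≠ Real.sqrt ((c : ℝ) * d) → μ ≠ -Real.sqrt ((c : ℝ) * d) →
        |μ| ≤ Real.sqrt ((c : ℝ) - 1) + Real.sqrt ((d : ℝ) - 1)) →
      lambda2 (commonNbrGraph H L) ≤
        (d : ℝ) - 2 + 2 * Real.sqrt ((c : ℝ) * ((d : ℝ) - 1) - ((d : ℝ) - 2) - 1)) := by
  refine ⟨part1_full hgirth hbip hdegL hdegR, fun hfew => ?_⟩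
  exact part2_full hc hd hconn hbip hdegL hdegR hgirth hfew

end PaperStmt
end
end

section
/- Let a, b be integers with b ≥ 1 and a ≥ b+2. For α ∈ [0, 1/2] set f(α) = −2α·log₂ α − (1−2α)·log₂(1−2α) + α·log₂(a−b−1) + (1−2α)·log₂ b, with the convention 0·log₂ 0 = 0. Then f(α) ≤ log₂(b + 2·√(a−b−1)) for all α ∈ [0, 1/2], with equality when α = √(a−b−1)/(b + 2·√(a−b−1)). -/
open scoped Classical
open Finset Polynomial

noncomputable section

namespace PaperStmt

variable {V : Type}

/-- The function `f(α) = H(α,α,1-2α) + α·log₂(a-b-1) + (1-2α)·log₂ b`. -/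
noncomputable def entropyF (a b : ℤ) (α : ℝ) : ℝ :=
  -(2 * α) * Real.logb 2 α - (1 - 2 * α) * Real.logb 2 (1 - 2 * α)
    + α * Real.logb 2 ((a : ℝ) - (b : ℝ) - 1) + (1 - 2 * α) * Real.logb 2 (b : ℝ)

theorem statement3 (a b : ℤ) (hb : 1 ≤ b) (ha : b + 2 ≤ a) :
    (∀ α ∈ Set.Icc (0 : ℝ) (1 / 2),
      entropyF a b α ≤ Real.logb 2 ((b : ℝ) + 2 * Real.sqrt ((a : ℝ) - (b : ℝ) - 1))) ∧
    entropyF a b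
        (Real.sqrt ((a : ℝ) - (b : ℝ) - 1) / ((b : ℝ) + 2 * Real.sqrt ((a : ℝ) - (b : ℝ) - 1)))
      = Real.logb 2 ((b : ℝ) + 2 * Real.sqrt ((a : ℝ) - (b : ℝ) - 1)) := by
  have hb1 : (1:ℝ) ≤ (b:ℝ) := by exact_mod_cast hb
  have hc1 : (1:ℝ) ≤ (a:ℝ) - (b:ℝ) - 1 := by
    have : ((b:ℝ) + 2) ≤ (a:ℝ) := by exact_mod_cast ha
    linarith
  set c : ℝ := (a:ℝ) - (b:ℝ) - 1 with hcdef
  set s : ℝ := Real.sqrt c with hsdef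
  have hs0 : 0 < s := Real.sqrt_pos.mpr (by linarith)
  have hsc : s ^ 2 = c := Real.sq_sqrt (by linarith)
  set T : ℝ := (b:ℝ) + 2 * s with hTdef
  have hT : 0 < T := by linarith
  have hL : 0 < Real.log 2 := Real.log_pos (by norm_num)
  have hlogc : Real.log c = 2 * Real.log s := by
    rw [← hsc, Real.log_pow]; push_cast; ring
  have key : ∀ p q : ℝ, 0 ≤ p → 0 < q → p * (Real.log q - Real.log p) ≤ q - p := by
    intro p q hp hq
    rcases eq_or_lt_of_le hp with h | h
    · simp [← h]; linarith
    · have hlog := Real.log_le_sub_one_of_pos (show 0 < q / p by positivity)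
      rw [Real.log_div (ne_of_gt hq) (ne_of_gt h)] at hlog
      have h2 := mul_le_mul_of_nonneg_left hlog (le_of_lt h)
      calc p * (Real.log q - Real.log p) ≤ p * (q / p - 1) := h2
        _ = q - p := by field_simp
  have hE : ∀ α : ℝ, entropyF a b α =
      (-(2 * α) * Real.log α - (1 - 2 * α) * Real.log (1 - 2 * α)
        + α * Real.log c + (1 - 2 * α) * Real.log (b:ℝ)) / Real.log 2 := by
    intro α
    simp only [entropyF, Real.logb, hcdef]
    ring
  have hls : Real.log (s / T) = Real.log s - Real.log T :=
    Real.log_div (ne_of_gt hs0) (ne_of_gt hT)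
  have hlb : Real.log ((b:ℝ) / T) = Real.log (b:ℝ) - Real.log T :=
    Real.log_div (by linarith) (ne_of_gt hT)
  have hsum : s / T + s / T + (b:ℝ) / T = 1 := by
    field_simp
    rw [hTdef]; ring
  have hlogbT : Real.logb 2 T = Real.log T / Real.log 2 := rfl
  constructor
  · rintro α ⟨h0, h12⟩
    have h1' : α * Real.log s - α * Real.log T - α * Real.log α ≤ s / T - α := by
      calc α * Real.log s - α * Real.log T - α * Real.log α
          = α * (Real.log (s / T) - Real.log α) := by rw [hls]; ring
        _ ≤ s / T - α := key α (s / T) h0 (by positivity)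
    have h3' : (1 - 2 * α) * Real.log (b:ℝ) - (1 - 2 * α) * Real.log T
        - (1 - 2 * α) * Real.log (1 - 2 * α) ≤ (b:ℝ) / T - (1 - 2 * α) := by
      calc (1 - 2 * α) * Real.log (b:ℝ) - (1 - 2 * α) * Real.log T
            - (1 - 2 * α) * Real.log (1 - 2 * α)
          = (1 - 2 * α) * (Real.log ((b:ℝ) / T) - Real.log (1 - 2 * α)) := by rw [hlb]; ring
        _ ≤ (b:ℝ) / T - (1 - 2 * α) := key _ _ (by linarith) (by positivity)
    rw [hE, hlogbT, div_le_div_iff_of_pos_right hL, hlogc]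
    nlinarith [h1', h3', hsum]
  · have hα : (1 : ℝ) - 2 * (s / T) = (b:ℝ) / T := by
      field_simp
      ring
    rw [hE, hα, hls, hlb, hlogc, hlogbT]
    have hT' : (2 * s + (b:ℝ)) = T := by rw [hTdef]; ring
    field_simp
    ring_nf
    linear_combination Real.log T * hT'

end PaperStmt
end
end

section
/- Let a > b ≥ 0 be integers, let G be an (a,b)-regular graph on n vertices with adjacency matrix A, and let t be a positive integer. Then trace(A^{t+2}) ≥ n · Σ_{0 ≤ k < t/2} [t!/(k!·k!·(t−2k)!)] · (1/(k+1)) · b^{t−2k} · (a−b−1)^k. -/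
/-!
Fix a vertex `v` and think of a walk `x = x₀, x₁, …, x_{h+1} = v` as a stack with top `x`. If `y`
is the vertex below `x`, then a step from `x` to one of the `b` common neighbours of `x` and `y`
replaces the top (a level step), a step to one of the `a - b - 1` neighbours of `x` outside
`N[y]` pushes a new vertex (an up step), and a step to `y` pops `x` (a down step). The three kinds of
targets are different neighbours of `x`. So `(A^(n+1)) x v` is at least the number `M(n, h)` of
Motzkin paths of length `n` from height `h` down to `0`, with `b` kinds of level steps and
`a - b - 1` kinds of up steps. Starting at `v` with a step to some neighbour gives
`(A^(t+2)) v v ≥ M(t, 0)`. A path counted by `M(t, 0)` with `k` up steps is given by the `2k`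
positions of its up and down steps, the Dyck word that they form, and the labels, so there are
`C(t, 2k) · Cat(k) · b^(t-2k) · (a-b-1)^k = t! / (k!² (t-2k)! (k+1)) · b^(t-2k) · (a-b-1)^k` of them.
-/

open scoped Classical
open Finset Polynomial

noncomputable section

namespace PaperStmt

variable {V : Type}

section MotzkinPaths

open DyckStep

-- Level steps labelled by `Fin b`, up steps labelled by `Fin c`, and down steps.
abbrev MotzkinStep (b c : ℕ) := Fin b ⊕ Fin c ⊕ Unit

variable {b c : ℕ}

def IsMotzkinFrom : ℕ → List (MotzkinStep b c) → Prop
  | h, [] => h = 0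
  | h, .inl _ :: l => IsMotzkinFrom h l
  | h, .inr (.inl _) :: l => IsMotzkinFrom (h + 1) l
  | 0, .inr (.inr _) :: _ => False
  | h + 1, .inr (.inr _) :: l => IsMotzkinFrom h l

def IsDyckFrom : ℕ → List DyckStep → Prop
  | h, [] => h = 0
  | h, U :: w => IsDyckFrom (h + 1) w
  | 0, D :: _ => False
  | h + 1, D :: w => IsDyckFrom h w

lemma isDyckFrom_of_count (w : List DyckStep) (h : ℕ)
    (hprefix : ∀ i, (w.take i).count D ≤ (w.take i).count U + h)
    (htotal : w.count U + h = w.count D) : IsDyckFrom h w := by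
  induction w generalizing h with
  | nil => simpa [IsDyckFrom, eq_comm] using htotal
  | cons s w ih =>
    have hstep (i : ℕ) := hprefix (i + 1)
    cases s with
    | U =>
      simp at hstep htotal
      exact ih (h + 1) (fun i => by have := hstep i; omega) (by omega)
    | D =>
      simp at hstep htotal
      obtain ⟨h, rfl⟩ : ∃ h', h = h' + 1 := Nat.exists_eq_add_one.mpr (by simpa using hstep 0)
      exact ih h (fun i => by have := hstep i; omega) (by omega)

lemma isDyckFrom_toList (w : DyckWord) : IsDyckFrom 0 w.toList :=
  isDyckFrom_of_count _ 0 (fun i => w.count_D_le_count_U i) (by simpa using w.count_U_eq_count_D)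

def nonLevelMask (l : List (MotzkinStep b c)) : List Bool := l.map Sum.isRight

def dyckSteps (l : List (MotzkinStep b c)) : List DyckStep :=
  l.filterMap fun | .inr (.inl _) => some U | .inr (.inr _) => some D | .inl _ => none

def levelLabels (l : List (MotzkinStep b c)) : List (Fin b) := l.filterMap Sum.getLeft?

def upLabels (l : List (MotzkinStep b c)) : List (Fin c) :=
  l.filterMap fun | .inr (.inl j) => some j | _ => none

lemma isMotzkinFrom_iff_isDyckFrom (l : List (MotzkinStep b c)) (h : ℕ) :
    IsMotzkinFrom h l ↔ IsDyckFrom h (dyckSteps l) := by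
  induction l generalizing h with
  | nil => simp [IsMotzkinFrom, IsDyckFrom, dyckSteps]
  | cons s l ih =>
    rcases s with _ | _ | _ <;> rcases h with _ | h <;>
      simp [IsMotzkinFrom, IsDyckFrom, dyckSteps, ih]

def interleave : List Bool → List DyckStep → List (Fin b) → List (Fin c) → List (MotzkinStep b c)
  | false :: m, w, i :: lv, up => .inl i :: interleave m w lv up
  | true :: m, U :: w, lv, j :: up => .inr (.inl j) :: interleave m w lv up
  | true :: m, D :: w, lv, up => .inr (.inr ()) :: interleave m w lv up
  | _, _, _, _ => []

def Interleavable (m : List Bool) (w : List DyckStep) (lv : List (Fin b)) (up : List (Fin c)) :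
    Prop :=
  m.count false = lv.length ∧ m.count true = w.length ∧ w.count U = up.length

lemma decode_interleave {m : List Bool} {w : List DyckStep} {lv : List (Fin b)}
    {up : List (Fin c)} (hmw : Interleavable m w lv up) :
    nonLevelMask (interleave m w lv up) = m ∧ dyckSteps (interleave m w lv up) = w ∧
      levelLabels (interleave m w lv up) = lv ∧ upLabels (interleave m w lv up) = up := by
  induction m generalizing w lv up with
  | nil =>
    obtain ⟨hlv, hw, hup⟩ := hmw
    simp_all [interleave, nonLevelMask, dyckSteps, levelLabels, upLabels, eq_comm]
  | cons x m ih =>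
    obtain ⟨hlv, hw, hup⟩ := hmw
    rcases x with _ | _
    · obtain ⟨i, lv, rfl⟩ := List.exists_cons_of_length_pos (l := lv) (by simp at hlv; omega)
      have := ih (w := w) (lv := lv) (up := up) ⟨by simpa using hlv, by simpa using hw, hup⟩
      simp_all [interleave, nonLevelMask, dyckSteps, levelLabels, upLabels]
    · obtain ⟨s, w, rfl⟩ := List.exists_cons_of_length_pos (l := w) (by simp at hw; omega)
      rcases s with _ | _
      · obtain ⟨j, up, rfl⟩ := List.exists_cons_of_length_pos (l := up) (by simp at hup; omega)
        have := ih (w := w) (lv := lv) (up := up) ⟨by simpa using hlv, by simpa using hw,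
          by simpa using hup⟩
        simp_all [interleave, nonLevelMask, dyckSteps, levelLabels, upLabels, List.filterMap_cons]
      · have := ih (w := w) (lv := lv) (up := up) ⟨by simpa using hlv, by simpa using hw,
          by simpa using hup⟩
        simp_all [interleave, nonLevelMask, dyckSteps, levelLabels, upLabels, List.filterMap_cons]

lemma interleave_inj {m m' : List Bool} {w w' : List DyckStep} {lv lv' : List (Fin b)}
    {up up' : List (Fin c)} (h : Interleavable m w lv up) (h' : Interleavable m' w' lv' up')
    (he : interleave m w lv up = interleave m' w' lv' up') :
    m = m' ∧ w = w' ∧ lv = lv' ∧ up = up' := by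
  obtain ⟨e1, e2, e3, e4⟩ := decode_interleave h
  obtain ⟨f1, f2, f3, f4⟩ := decode_interleave h'
  rw [he] at e1 e2 e3 e4
  exact ⟨e1.symm.trans f1, e2.symm.trans f2, e3.symm.trans f3, e4.symm.trans f4⟩

lemma length_interleave {m : List Bool} {w : List DyckStep} {lv : List (Fin b)}
    {up : List (Fin c)} (h : Interleavable m w lv up) :
    (interleave m w lv up).length = m.length := by
  simpa [nonLevelMask] using congrArg List.length (decode_interleave h).1

lemma isMotzkinFrom_interleave {m : List Bool} {w : List DyckStep} {lv : List (Fin b)}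
    {up : List (Fin c)} (h : Interleavable m w lv up) {n : ℕ} (hw : IsDyckFrom n w) :
    IsMotzkinFrom n (interleave m w lv up) := by
  rwa [isMotzkinFrom_iff_isDyckFrom, (decode_interleave h).2.1]

variable (b c) in
def motzkinCount (n h : ℕ) : ℕ :=
  Nat.card {l : Fin n → MotzkinStep b c // IsMotzkinFrom h (List.ofFn l)}

lemma motzkinCount_zero (h : ℕ) : motzkinCount b c 0 h = if h = 0 then 1 else 0 := by
  split_ifs with h0 <;> simp [motzkinCount, IsMotzkinFrom, h0]

lemma motzkinCount_succ (n h : ℕ) :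
    motzkinCount b c (n + 1) h = b * motzkinCount b c n h + c * motzkinCount b c n (h + 1) +
      if h = 0 then 0 else motzkinCount b c n (h - 1) := by
  have hcons : motzkinCount b c (n + 1) h =
      ∑ s : MotzkinStep b c, Nat.card {l : Fin n → MotzkinStep b c //
        IsMotzkinFrom h (s :: List.ofFn l)} := by
    rw [motzkinCount, ← Nat.card_sigma]
    exact Nat.card_congr ((Equiv.subtypeEquiv (Fin.consEquiv fun _ => MotzkinStep b c).symm
      (fun l => by rw [List.ofFn_succ]; rfl)).trans
      (Equiv.subtypeProdEquivSigmaSubtype fun s l => IsMotzkinFrom h (s :: List.ofFn l)))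
  rw [hcons, Fintype.sum_sum_type, Fintype.sum_sum_type]
  rcases h with _ | h <;> simp [IsMotzkinFrom, motzkinCount, add_assoc]

-- The positions of the non-level steps, the Dyck word they form, and the labels of the level
-- and of the up steps.
abbrev MotzkinData (b c t k : ℕ) :=
  {P : Finset (Fin t) // #P = 2 * k} × {w : DyckWord // w.semilength = k} ×
    (Fin (t - 2 * k) → Fin b) × (Fin k → Fin c)

namespace MotzkinData

variable {t k : ℕ}

def mask (σ : MotzkinData b c t k) : List Bool := List.ofFn fun i => decide (i ∈ σ.1.1)

def toList (σ : MotzkinData b c t k) : List (MotzkinStep b c) :=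
  interleave σ.mask σ.2.1.1.toList (List.ofFn σ.2.2.1) (List.ofFn σ.2.2.2)

lemma count_true_mask (σ : MotzkinData b c t k) : σ.mask.count true = 2 * k := by
  rw [mask, ← Multiset.coe_count, ← Fin.univ_val_map, Multiset.count_map]
  simp [← Finset.filter_val, σ.1.2]

lemma interleavable (σ : MotzkinData b c t k) :
    Interleavable σ.mask σ.2.1.1.toList (List.ofFn σ.2.2.1) (List.ofFn σ.2.2.2) := by
  have htrue := σ.count_true_mask
  have hsplit := List.count_true_add_count_false σ.mask
  have hw := σ.2.1.1.two_mul_semilength_eq_length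
  rw [σ.2.1.2] at hw
  have hlen : σ.mask.length = t := List.length_ofFn
  refine ⟨?_, ?_, ?_⟩
  · rw [List.length_ofFn]; omega
  · omega
  · rw [List.length_ofFn]; exact σ.2.1.2

lemma length_toList (σ : MotzkinData b c t k) : σ.toList.length = t := by
  rw [toList, length_interleave σ.interleavable, mask, List.length_ofFn]

lemma isMotzkinFrom_toList (σ : MotzkinData b c t k) : IsMotzkinFrom 0 σ.toList :=
  isMotzkinFrom_interleave σ.interleavable (isDyckFrom_toList _)

lemma card (b c t k : ℕ) : Fintype.card (MotzkinData b c t k) =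
    t.choose (2 * k) * catalan k * b ^ (t - 2 * k) * c ^ k := by
  simp [Fintype.card_finset_len, DyckWord.card_dyckWord_semilength_eq_catalan, mul_assoc]

lemma ofFn_getElem_toList (σ : MotzkinData b c t k) :
    List.ofFn (fun i : Fin t => σ.toList[i]'(i.2.trans_eq σ.length_toList.symm)) = σ.toList :=
  List.ext_getElem (by simp [σ.length_toList]) (by simp)

def toPath (σ : MotzkinData b c t k) :
    {l : Fin t → MotzkinStep b c // IsMotzkinFrom 0 (List.ofFn l)} :=
  ⟨fun i => σ.toList[i]'(i.2.trans_eq σ.length_toList.symm), by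
    rw [σ.ofFn_getElem_toList]; exact σ.isMotzkinFrom_toList⟩

lemma toPath_injective :
    Function.Injective fun σ : Σ k, MotzkinData b c t k => σ.2.toPath := by
  rintro ⟨k, σ⟩ ⟨k', σ'⟩ h
  have hlist : σ.toList = σ'.toList := by
    rw [← σ.ofFn_getElem_toList, ← σ'.ofFn_getElem_toList]
    exact congrArg (List.ofFn ∘ Subtype.val) h
  obtain ⟨hmask, hw, hlv, hup⟩ := interleave_inj σ.interleavable σ'.interleavable hlist
  obtain rfl : k = k' := by
    have := σ.count_true_mask
    rw [hmask, σ'.count_true_mask] at this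
    omega
  obtain ⟨⟨P, hP⟩, ⟨w, hw'⟩, lv, up⟩ := σ
  obtain ⟨⟨P', hP'⟩, ⟨w', hw''⟩, lv', up'⟩ := σ'
  have hPP' : P = P' := by
    ext i
    simpa using congrFun (List.ofFn_injective hmask) i
  subst hPP'
  obtain rfl : w = w' := DyckWord.ext hw
  obtain rfl := List.ofFn_injective hlv
  obtain rfl := List.ofFn_injective hup
  rfl

end MotzkinData

theorem sum_choose_mul_catalan_le_motzkinCount (b c t : ℕ) :
    ∑ k ∈ range ((t + 1) / 2), t.choose (2 * k) * catalan k * b ^ (t - 2 * k) * c ^ k ≤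
      motzkinCount b c t 0 := by
  have hsum : ∑ k ∈ range ((t + 1) / 2), t.choose (2 * k) * catalan k * b ^ (t - 2 * k) * c ^ k
      = #((range ((t + 1) / 2)).sigma fun k => (univ : Finset (MotzkinData b c t k))) := by
    rw [card_sigma]
    simp only [card_univ, MotzkinData.card]
  rw [hsum, motzkinCount, Nat.card_eq_fintype_card, ← Finset.card_univ]
  exact Finset.card_le_card_of_injOn _ (fun _ _ => Finset.mem_coe.mpr (mem_univ _))
    MotzkinData.toPath_injective.injOn

end MotzkinPaths

section RegularGraphs

open SimpleGraph

variable [Fintype V] {G : SimpleGraph V} {a b : ℕ}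

lemma IsABRegular.card_neighborFinset (hreg : IsABRegular G a b) (x : V) :
    #(G.neighborFinset x) = a := by
  rw [neighborFinset_eq_filter]
  exact hreg.1 x

variable [DecidableEq V]

lemma IsABRegular.card_neighborFinset_inter (hreg : IsABRegular G a b) {x y : V}
    (hxy : G.Adj x y) : #(G.neighborFinset x ∩ G.neighborFinset y) = b := by
  rw [← hreg.2 y ⟨x, hxy.symm⟩, degR]
  refine (Finset.card_bij (fun u _ => u.1) ?_ (fun _ _ _ _ => Subtype.ext) ?_).symm <;>
    simp +contextual [link, adj_comm]

lemma IsABRegular.card_neighborFinset_sdiff (hreg : IsABRegular G a b) {x y : V}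
    (hxy : G.Adj x y) : #(G.neighborFinset x \ insert y (G.neighborFinset y)) = a - b - 1 := by
  have hinter : insert y (G.neighborFinset y) ∩ G.neighborFinset x =
      insert y (G.neighborFinset x ∩ G.neighborFinset y) := by
    rw [insert_inter_of_mem (by simpa using hxy), inter_comm]
  rw [card_sdiff, hinter, card_insert_of_notMem (by simp), hreg.card_neighborFinset,
    hreg.card_neighborFinset_inter hxy, Nat.sub_sub]

lemma sum_inter_add_sum_sdiff_add_le_sum_neighborFinset {x y : V} (hxy : G.Adj x y)
    (f : V → ℕ) :
    ∑ z ∈ G.neighborFinset x ∩ G.neighborFinset y, f z +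
        ∑ z ∈ G.neighborFinset x \ insert y (G.neighborFinset y), f z + f y ≤
      ∑ z ∈ G.neighborFinset x, f z := by
  rw [← sum_union (disjoint_left.2 fun z hz hz' => by simp_all), add_comm,
    ← sum_insert (by simp)]
  refine sum_le_sum_of_subset fun z hz => ?_
  simp only [mem_insert, mem_union, mem_inter, mem_sdiff] at hz
  rcases hz with rfl | ⟨hz, -⟩ | ⟨hz, -⟩
  exacts [by simpa using hxy, hz, hz]

theorem motzkinCount_le_adjMatrix_pow_apply (hreg : IsABRegular G a b) (n : ℕ) {h : ℕ}
    {x v : V} (p : G.Walk x v) (hp : p.length = h + 1) :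
    motzkinCount b (a - b - 1) n h ≤ (G.adjMatrix ℕ ^ (n + 1)) x v := by
  induction n generalizing h x with
  | zero =>
    rw [motzkinCount_zero]
    split_ifs with h0
    · simp [adjMatrix_apply, p.adj_of_length_eq_one (by rw [hp, h0])]
    · exact Nat.zero_le _
  | succ n ih =>
    cases p with
    | nil => simp at hp
    | @cons _ y _ hxy q =>
      have hq : q.length = h := by simpa using hp
      have hlevel : ∀ z ∈ G.neighborFinset x ∩ G.neighborFinset y,
          motzkinCount b (a - b - 1) n h ≤ (G.adjMatrix ℕ ^ (n + 1)) z v := fun z hz =>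
        ih (q.cons ((mem_neighborFinset _ _ _).1 (mem_inter.1 hz).2).symm) (by simp [hq])
      have hup : ∀ z ∈ G.neighborFinset x \ insert y (G.neighborFinset y),
          motzkinCount b (a - b - 1) n (h + 1) ≤ (G.adjMatrix ℕ ^ (n + 1)) z v := fun z hz =>
        ih ((q.cons hxy).cons ((mem_neighborFinset _ _ _).1 (mem_sdiff.1 hz).1).symm) (by simp [hq])
      have hdown : (if h = 0 then 0 else motzkinCount b (a - b - 1) n (h - 1)) ≤
          (G.adjMatrix ℕ ^ (n + 1)) y v := by
        split_ifs with h0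
        · exact Nat.zero_le _
        · exact ih q (by omega)
      rw [motzkinCount_succ, pow_succ', adjMatrix_mul_apply]
      refine le_trans ?_ (sum_inter_add_sum_sdiff_add_le_sum_neighborFinset hxy _)
      gcongr
      · calc b * motzkinCount b (a - b - 1) n h
            = ∑ _z ∈ G.neighborFinset x ∩ G.neighborFinset y, motzkinCount b (a - b - 1) n h := by
              rw [sum_const, hreg.card_neighborFinset_inter hxy, smul_eq_mul]
          _ ≤ _ := sum_le_sum hlevel
      · calc (a - b - 1) * motzkinCount b (a - b - 1) n (h + 1)
            = ∑ _z ∈ G.neighborFinset x \ insert y (G.neighborFinset y),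
                motzkinCount b (a - b - 1) n (h + 1) := by
              rw [sum_const, hreg.card_neighborFinset_sdiff hxy, smul_eq_mul]
          _ ≤ _ := sum_le_sum hup

theorem motzkinCount_le_adjMatrix_pow_apply_self (hreg : IsABRegular G a b) (hab : b < a)
    (t : ℕ) (v : V) : motzkinCount b (a - b - 1) t 0 ≤ (G.adjMatrix ℕ ^ (t + 2)) v v := by
  obtain ⟨u, hu⟩ : (G.neighborFinset v).Nonempty := by
    rw [← card_pos, hreg.card_neighborFinset]
    omega
  rw [pow_succ', adjMatrix_mul_apply]
  have huv : G.Adj u v := ((mem_neighborFinset _ _ _).1 hu).symm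
  exact (motzkinCount_le_adjMatrix_pow_apply hreg t (Walk.cons huv Walk.nil) rfl).trans
    (single_le_sum (f := fun z => (G.adjMatrix ℕ ^ (t + 1)) z v) (fun _ _ => Nat.zero_le _) hu)

lemma trace_adjMat_pow (n : ℕ) :
    Matrix.trace (adjMat G ^ n) = ∑ v, ((G.adjMatrix ℕ ^ n) v v : ℝ) := by
  have hA : adjMat G = G.adjMatrix ℝ := by
    ext u w
    simp [adjMat, adjMatrix_apply]
  simp [Matrix.trace, hA, adjMatrix_pow_apply_eq_card_walk]

end RegularGraphs

lemma cast_choose_mul_catalan {t k : ℕ} (hk : 2 * k ≤ t) :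
    ((t.choose (2 * k) * catalan k : ℕ) : ℝ) =
      t.factorial / (k.factorial * k.factorial * (t - 2 * k).factorial) * (1 / ((k : ℝ) + 1)) := by
  have hcat : ((k + 1 : ℕ) : ℝ) * catalan k = (2 * k).factorial / (k.factorial * k.factorial) := by
    rw [← Nat.cast_mul, succ_mul_catalan_eq_centralBinom, Nat.centralBinom_eq_two_mul_choose,
      Nat.cast_choose ℝ (by omega : k ≤ 2 * k), show 2 * k - k = k by omega]
  rw [Nat.cast_succ, eq_div_iff (by positivity)] at hcat
  rw [Nat.cast_mul, Nat.cast_choose ℝ hk]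
  field_simp
  linear_combination hcat

theorem statement4_general {V : Type} [Fintype V] [DecidableEq V] (G : SimpleGraph V)
    (a b : ℕ) (hab : b < a) (hreg : IsABRegular G a b) (t : ℕ) :
    (Fintype.card V : ℝ) * ∑ k ∈ Finset.range ((t + 1) / 2),
        (t.factorial : ℝ) / ((k.factorial : ℝ) * k.factorial * (t - 2 * k).factorial)
          * (1 / ((k : ℝ) + 1)) * (b : ℝ) ^ (t - 2 * k) * ((a : ℝ) - b - 1) ^ k
      ≤ Matrix.trace (adjMat G ^ (t + 2)) := by
  have hterm : ∀ k ∈ range ((t + 1) / 2),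
      (t.factorial : ℝ) / ((k.factorial : ℝ) * k.factorial * (t - 2 * k).factorial)
          * (1 / ((k : ℝ) + 1)) * (b : ℝ) ^ (t - 2 * k) * ((a : ℝ) - b - 1) ^ k =
        ((t.choose (2 * k) * catalan k * b ^ (t - 2 * k) * (a - b - 1) ^ k : ℕ) : ℝ) := by
    intro k hk
    rw [Nat.cast_mul, Nat.cast_mul, cast_choose_mul_catalan (by simp at hk; omega),
      Nat.cast_pow, Nat.cast_pow, Nat.cast_sub (by omega), Nat.cast_sub (by omega)]
    push_cast
    ring
  calc _ = ∑ _v : V, ((∑ k ∈ range ((t + 1) / 2),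
          t.choose (2 * k) * catalan k * b ^ (t - 2 * k) * (a - b - 1) ^ k : ℕ) : ℝ) := by
        rw [sum_congr rfl hterm, sum_const, card_univ, nsmul_eq_mul, Nat.cast_sum]
    _ ≤ ∑ v, ((G.adjMatrix ℕ ^ (t + 2)) v v : ℝ) := by
        gcongr with v
        exact (sum_choose_mul_catalan_le_motzkinCount _ _ t).trans
          (motzkinCount_le_adjMatrix_pow_apply_self hreg hab t v)
    _ = _ := (trace_adjMat_pow _).symm

theorem statement4 {V : Type} [Fintype V] [DecidableEq V] (G : SimpleGraph V)
    (a b : ℕ) (hab : b < a) (hreg : IsABRegular G a b) (t : ℕ) (ht : 1 ≤ t) :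
    (Fintype.card V : ℝ) * ∑ k ∈ Finset.range ((t + 1) / 2),
        (t.factorial : ℝ) / ((k.factorial : ℝ) * k.factorial * (t - 2 * k).factorial)
          * (1 / ((k : ℝ) + 1)) * (b : ℝ) ^ (t - 2 * k) * ((a : ℝ) - b - 1) ^ k
      ≤ Matrix.trace (adjMat G ^ (t + 2)) :=
  statement4_general G a b hab hreg t

end PaperStmt
end
end

section
/- Let G be a finite connected non-bipartite graph with minimum degree at least 3, and let t ≥ 1 be an integer. Let H_t be the graph on V(G) in which distinct vertices u, v are adjacent iff there is a non-backtracking walk of length t in G from u to v. Then H_t is connected and non-bipartite (it contains an odd cycle). -/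
open scoped Classical
open Finset Polynomial

noncomputable section

namespace PaperStmt

variable {V : Type}

section Helpers
variable {G : SimpleGraph V} {t : ℕ}

lemma fin2_eq_of_ne : ∀ a b c : Fin 2, a ≠ b → c ≠ b → a = c := by decide

lemma ntAdj {w : ℕ → V} (h : IsNBWalk G t w) {a b : V} (ha : w 0 = a) (hb : w t = b)
    (hne : a ≠ b) : (ntWalkGraph G t).Adj a b := by
  subst ha hb
  exact (SimpleGraph.fromRel_adj _ _ _).mpr ⟨hne, Or.inl ⟨w, rfl, rfl, h⟩⟩

lemma ntAdjOrEq {w : ℕ → V} (h : IsNBWalk G t w) {a b : V} (ha : w 0 = a) (hb : w t = b) :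
    (ntWalkGraph G t).Adj a b ∨ a = b := by
  by_cases hne : a = b
  · exact Or.inr hne
  · exact Or.inl (ntAdj h ha hb hne)

lemma ntReach {w : ℕ → V} (h : IsNBWalk G t w) {a b : V} (ha : w 0 = a) (hb : w t = b) :
    (ntWalkGraph G t).Reachable a b := by
  rcases ntAdjOrEq h ha hb with h' | h'
  · exact h'.reachable
  · exact h' ▸ SimpleGraph.Reachable.refl a

lemma exists_adj_ne [Fintype V] (hmin : ∀ v, 3 ≤ degR G v) (v p q : V) :
    ∃ y, G.Adj v y ∧ y ≠ p ∧ y ≠ q := by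
  have h3 : 2 < (Finset.univ.filter (fun u => G.Adj v u)).card := hmin v
  rw [Finset.two_lt_card] at h3
  obtain ⟨a, ha, b, hb, c, hc, hab, hac, hbc⟩ := h3
  simp only [Finset.mem_filter] at ha hb hc
  by_cases hap : a = p
  · by_cases hbq : b = q
    · exact ⟨c, hc.2, fun h => hac (by rw [hap, h]), fun h => hbc (by rw [hbq, h])⟩
    · exact ⟨b, hb.2, fun h => hab (by rw [hap, h]), hbq⟩
  · by_cases haq : a = q
    · by_cases hbp : b = p
      · exact ⟨c, hc.2, fun h => hbc (by rw [hbp, h]), fun h => hac (by rw [haq, h])⟩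
      · exact ⟨b, hb.2, hbp, fun h => hab (by rw [haq, h])⟩
    · exact ⟨a, ha.2, hap, haq⟩

end Helpers

section Windows
variable {G : SimpleGraph V} {t L : ℕ} {c : ZMod L → V}

lemma cne (hinj : Function.Injective c) {a b : ZMod L} (h : a ≠ b) : c a ≠ c b :=
  fun h' => h (hinj h')

lemma two_ne (hodd : Odd L) (hL3 : 3 ≤ L) : (2 : ZMod L) ≠ 0 := by
  have : ((2 : ℕ) : ZMod L) ≠ 0 := by
    rw [Ne, ZMod.natCast_eq_zero_iff]
    intro h
    have := Nat.le_of_dvd (by norm_num) h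
    omega
  simpa using this

lemma four_ne (hodd : Odd L) (hL3 : 3 ≤ L) : (4 : ZMod L) ≠ 0 := by
  have : ((4 : ℕ) : ZMod L) ≠ 0 := by
    rw [Ne, ZMod.natCast_eq_zero_iff]
    intro h
    have h4 := Nat.le_of_dvd (by norm_num) h
    interval_cases L
    · exact absurd h (by norm_num)
    · exact (Nat.not_even_iff_odd.mpr hodd) (by decide)
  simpa using this

/-- circling window -/
lemma W1circ (hc : ∀ j, G.Adj (c j) (c (j + 1))) (hinj : Function.Injective c)
    (hodd : Odd L) (hL3 : 3 ≤ L) (j : ZMod L) :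
    IsNBWalk G t (fun i : ℕ => c (j + (i : ZMod L))) := by
  constructor
  · intro i _
    show G.Adj (c (j + (i : ZMod L))) (c (j + ((i + 1 : ℕ) : ZMod L)))
    have h1 : ((i + 1 : ℕ) : ZMod L) = (i : ZMod L) + 1 := by push_cast; ring
    rw [h1, ← add_assoc]
    exact hc (j + (i : ZMod L))
  · intro i h0 _
    show c (j + ((i + 1 : ℕ) : ZMod L)) ≠ c (j + ((i - 1 : ℕ) : ZMod L))
    have h1 : ((i + 1 : ℕ) : ZMod L) = (i : ZMod L) + 1 := by push_cast; ring
    have h2 : ((i - 1 : ℕ) : ZMod L) = (i : ZMod L) - 1 := by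
      push_cast [Nat.cast_sub h0]; ring
    rw [h1, h2]
    apply cne hinj
    intro h
    apply two_ne hodd hL3
    have heq : (j + ((i : ZMod L) + 1)) - (j + ((i : ZMod L) - 1)) = 2 := by ring
    rw [h] at heq
    rw [← heq]; ring
end Windows


section WindowsA
variable {G : SimpleGraph V} {t L : ℕ} {c : ZMod L → V}

lemma cne2 (h2 : (2:ZMod L) ≠ 0) (hinj : Function.Injective c) {a b : ZMod L}
    (h : a - b = 2) : c a ≠ c b := by
  apply cne hinj; intro h'; apply h2; rw [← h, h']; ring

lemma castsub {i k : ℕ} (h : k ≤ i) : ((i - k : ℕ) : ZMod L) = (i : ZMod L) - (k : ℕ) := by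
  push_cast [Nat.cast_sub h]; ring

lemma W2exit (hc : ∀ j, G.Adj (c j) (c (j + 1))) (hinj : Function.Injective c)
    (h2 : (2:ZMod L) ≠ 0) (ht : 2 ≤ t) (j : ZMod L) (y : V)
    (hy : G.Adj (c (j + ((t - 1 : ℕ) : ZMod L))) y)
    (hy2 : y ≠ c (j + ((t - 2 : ℕ) : ZMod L))) :
    IsNBWalk G t (fun i : ℕ => if i < t then c (j + (i : ZMod L)) else y) := by
  constructor
  · intro i hi
    beta_reduce
    rcases Nat.lt_or_ge (i + 1) t with h1 | h1
    · rw [if_pos hi, if_pos h1]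
      have e : ((i + 1 : ℕ) : ZMod L) = (i : ZMod L) + 1 := by push_cast; ring
      rw [e, ← add_assoc]
      exact hc _
    · have hit : i = t - 1 := by omega
      have hnt : ¬ (i + 1 < t) := by omega
      rw [if_pos hi, if_neg hnt, hit]
      exact hy
  · intro i h0 hi
    beta_reduce
    rcases Nat.lt_or_ge (i + 1) t with h1 | h1
    · rw [if_pos h1, if_pos (by omega : i - 1 < t)]
      apply cne2 h2 hinj
      rw [castsub h0]
      push_cast
      ring
    · have hnt : ¬ (i + 1 < t) := by omega
      have hit : i - 1 = t - 2 := by omega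
      rw [if_neg hnt, if_pos (by omega : i - 1 < t), hit]
      exact hy2
end WindowsA
section Windows2
variable {V : Type} {G : SimpleGraph V} {t L : ℕ} {c : ZMod L → V}

lemma W3enter (hc : ∀ j, G.Adj (c j) (c (j + 1))) (hinj : Function.Injective c)
    (h2 : (2:ZMod L) ≠ 0) (ht : 2 ≤ t) (j : ZMod L) (y : V)
    (hy : G.Adj y (c j)) (hy2 : y ≠ c (j + 1)) :
    IsNBWalk G t (fun i : ℕ => if i = 0 then y else c (j + ((i - 1 : ℕ) : ZMod L))) := by
  constructor
  · intro i hi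
    beta_reduce
    rcases Nat.eq_zero_or_pos i with h0 | h0
    · subst h0
      rw [if_pos rfl, if_neg (by omega : ¬ (0 + 1 = 0))]
      simpa using hy
    · rw [if_neg (by omega : ¬ i = 0), if_neg (by omega : ¬ i + 1 = 0)]
      have e1 : (i + 1 - 1 : ℕ) = i := by omega
      rw [e1, castsub h0]
      convert hc (j + ((i:ZMod L) - 1)) using 2 <;> push_cast <;> ring
  · intro i h0 hi
    beta_reduce
    rw [if_neg (by omega : ¬ i + 1 = 0)]
    rcases Nat.lt_or_ge i 2 with h1 | h1
    · have : i = 1 := by omega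
      subst this
      rw [if_pos rfl]
      have e1 : (1 + 1 - 1 : ℕ) = 1 := by omega
      rw [e1]
      simpa using hy2.symm
    · rw [if_neg (by omega : ¬ i - 1 = 0)]
      apply cne2 h2 hinj
      have e1 : (i + 1 - 1 : ℕ) = i := by omega
      have e2 : (i - 1 - 1 : ℕ) = i - 2 := by omega
      rw [e1, e2, castsub (by omega : 2 ≤ i)]
      push_cast
      ring

lemma W4exit2 (hc : ∀ j, G.Adj (c j) (c (j + 1))) (hinj : Function.Injective c)
    (h2 : (2:ZMod L) ≠ 0) (ht : 3 ≤ t) (j : ZMod L) (y x : V)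
    (hy : G.Adj (c (j + ((t - 2 : ℕ) : ZMod L))) y)
    (hy2 : y ≠ c (j + ((t - 3 : ℕ) : ZMod L)))
    (hx : G.Adj y x) (hx2 : x ≠ c (j + ((t - 2 : ℕ) : ZMod L))) :
    IsNBWalk G t
      (fun i : ℕ => if i ≤ t - 2 then c (j + (i : ZMod L)) else if i = t - 1 then y else x) := by
  constructor
  · intro i hi
    beta_reduce
    rcases Nat.lt_or_ge (i + 1) (t - 1) with h1 | h1
    · rw [if_pos (by omega : i ≤ t - 2), if_pos (by omega : i + 1 ≤ t - 2)]
      have e : ((i + 1 : ℕ) : ZMod L) = (i : ZMod L) + 1 := by push_cast; ring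
      rw [e, ← add_assoc]
      exact hc _
    · rcases Nat.lt_or_ge i (t - 1) with h3 | h3
      · have hieq : i = t - 2 := by omega
        rw [if_pos (by omega : i ≤ t - 2), if_neg (by omega : ¬ i + 1 ≤ t - 2),
          if_pos (by omega : i + 1 = t - 1), hieq]
        exact hy
      · have hieq : i = t - 1 := by omega
        rw [if_neg (by omega : ¬ i ≤ t - 2), if_pos hieq, if_neg (by omega : ¬ i + 1 ≤ t - 2),
          if_neg (by omega : ¬ i + 1 = t - 1)]
        exact hx
  · intro i h0 hi
    beta_reduce
    rcases Nat.lt_or_ge (i + 1) (t - 1) with h1 | h1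
    · rw [if_pos (by omega : i + 1 ≤ t - 2), if_pos (by omega : i - 1 ≤ t - 2)]
      apply cne2 h2 hinj
      rw [castsub h0]
      push_cast
      ring
    · rcases Nat.lt_or_ge i (t - 1) with h3 | h3
      · have hieq : i - 1 = t - 3 := by omega
        rw [if_neg (by omega : ¬ i + 1 ≤ t - 2), if_pos (by omega : i + 1 = t - 1),
          if_pos (by omega : i - 1 ≤ t - 2), hieq]
        exact hy2
      · have hieq : i - 1 = t - 2 := by omega
        rw [if_neg (by omega : ¬ i + 1 ≤ t - 2), if_neg (by omega : ¬ i + 1 = t - 1),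
          if_pos (by omega : i - 1 ≤ t - 2), hieq]
        exact hx2

lemma W5 (hc : ∀ j, G.Adj (c j) (c (j + 1))) (hinj : Function.Injective c)
    (h2 : (2:ZMod L) ≠ 0) (ht : 4 ≤ t) (a : ZMod L) (y₀ y₁ x : V)
    (h0 : G.Adj y₀ (c a)) (h0' : y₀ ≠ c (a + 1))
    (h1 : G.Adj (c (a + ((t - 3 : ℕ) : ZMod L))) y₁)
    (h1' : y₁ ≠ c (a + ((t - 4 : ℕ) : ZMod L)))
    (hx : G.Adj y₁ x) (hx2 : x ≠ c (a + ((t - 3 : ℕ) : ZMod L))) :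
    IsNBWalk G t
      (fun i : ℕ => if i = 0 then y₀ else if i ≤ t - 2 then c (a + ((i - 1 : ℕ) : ZMod L))
        else if i = t - 1 then y₁ else x) := by
  constructor
  · intro i hi
    beta_reduce
    rw [if_neg (by omega : ¬ i + 1 = 0)]
    rcases Nat.eq_zero_or_pos i with hz | hz
    · subst hz
      rw [if_pos rfl, if_pos (by omega : 0 + 1 ≤ t - 2)]
      simpa using h0
    · rw [if_neg (by omega : ¬ i = 0)]
      rcases Nat.lt_or_ge (i + 1) (t - 1) with hA | hA
      · rw [if_pos (by omega : i ≤ t - 2), if_pos (by omega : i + 1 ≤ t - 2)]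
        have e1 : (i + 1 - 1 : ℕ) = i := by omega
        rw [e1, castsub hz]
        convert hc (a + ((i:ZMod L) - 1)) using 2 <;> push_cast <;> ring
      · rcases Nat.lt_or_ge i (t - 1) with hB | hB
        · have hieq : i = t - 2 := by omega
          rw [if_pos (by omega : i ≤ t - 2), if_neg (by omega : ¬ i + 1 ≤ t - 2),
            if_pos (by omega : i + 1 = t - 1), hieq]
          have e1 : (t - 2 - 1 : ℕ) = t - 3 := by omega
          rw [e1]
          exact h1
        · have hieq : i = t - 1 := by omega
          rw [if_neg (by omega : ¬ i ≤ t - 2), if_pos hieq, if_neg (by omega : ¬ i + 1 ≤ t - 2),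
            if_neg (by omega : ¬ i + 1 = t - 1)]
          exact hx
  · intro i hz hi
    beta_reduce
    rw [if_neg (by omega : ¬ i + 1 = 0)]
    rcases Nat.lt_or_ge i 2 with hA | hA
    · have : i = 1 := by omega
      subst this
      rw [if_pos (by omega : 1 + 1 ≤ t - 2), if_pos rfl]
      have e1 : (1 + 1 - 1 : ℕ) = 1 := by omega
      rw [e1]
      simpa using h0'.symm
    · rw [if_neg (by omega : ¬ i - 1 = 0)]
      rcases Nat.lt_or_ge (i + 1) (t - 1) with hB | hB
      · rw [if_pos (by omega : i + 1 ≤ t - 2), if_pos (by omega : i - 1 ≤ t - 2)]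
        apply cne2 h2 hinj
        have e1 : (i + 1 - 1 : ℕ) = i := by omega
        have e2 : (i - 1 - 1 : ℕ) = i - 2 := by omega
        rw [e1, e2, castsub (by omega : 2 ≤ i)]
        push_cast
        ring
      · rcases Nat.lt_or_ge i (t - 1) with hC | hC
        · have hieq : i = t - 2 := by omega
          rw [if_neg (by omega : ¬ i + 1 ≤ t - 2), if_pos (by omega : i + 1 = t - 1),
            if_pos (by omega : i - 1 ≤ t - 2), hieq]
          have e1 : (t - 2 - 1 - 1 : ℕ) = t - 4 := by omega
          rw [e1]
          exact h1'
        · have hieq : i = t - 1 := by omega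
          rw [if_neg (by omega : ¬ i + 1 ≤ t - 2), if_neg (by omega : ¬ i + 1 = t - 1),
            if_pos (by omega : i - 1 ≤ t - 2), hieq]
          have e1 : (t - 1 - 1 - 1 : ℕ) = t - 3 := by omega
          rw [e1]
          exact hx2

lemma W0 {p q r s : V} (hpq : G.Adj p q) (hqr : G.Adj q r) (hrs : G.Adj r s)
    (hrp : r ≠ p) (hsq : s ≠ q) :
    IsNBWalk G 3 (fun i : ℕ => if i = 0 then p else if i = 1 then q else if i = 2 then r else s) := by
  constructor
  · intro i hi
    interval_cases i <;> simpa
  · intro i h0 hi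
    interval_cases i
    · simpa using hrp
    · simpa using hsq
end Windows2

section Cyc
variable {G : SimpleGraph V}

lemma exists_odd_closed (hconn : G.Connected) (hnb : ¬ G.Colorable 2) :
    ∃ n, Odd n ∧ ∃ f : ℕ → V, f n = f 0 ∧ ∀ i < n, G.Adj (f i) (f (i + 1)) := by
  by_contra h
  push_neg at h
  obtain ⟨v₀⟩ := hconn.nonempty
  have key : ∀ (a : V) (w1 w2 : G.Walk v₀ a), Even w1.length ↔ Even w2.length := by
    intro a w1 w2
    by_contra hpar
    have hodd : Odd (w1.length + w2.length) := by
      rcases Nat.even_or_odd w1.length with h1 | h1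
      · rcases Nat.even_or_odd w2.length with h2 | h2
        · exact absurd (iff_of_true h1 h2) hpar
        · exact h1.add_odd h2
      · rcases Nat.even_or_odd w2.length with h2 | h2
        · exact h1.add_even h2
        · exact absurd (iff_of_false (Nat.not_even_iff_odd.mpr h1)
            (Nat.not_even_iff_odd.mpr h2)) hpar
    set W : G.Walk v₀ v₀ := w1.append w2.reverse with hW
    have hlen : W.length = w1.length + w2.length := by
      rw [hW, SimpleGraph.Walk.length_append, SimpleGraph.Walk.length_reverse]
    obtain ⟨i, hi, hna⟩ := h W.length (by rw [hlen]; exact hodd) W.getVert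
      (by rw [SimpleGraph.Walk.getVert_length, SimpleGraph.Walk.getVert_zero])
    exact hna (W.adj_getVert_succ hi)
  apply hnb
  refine ⟨SimpleGraph.Coloring.mk
    (fun v => if Even ((hconn v₀ v).some.length) then 0 else 1) ?_⟩
  intro u v huv
  beta_reduce
  have hw : ∀ w2 : G.Walk v₀ v, Even ((hconn v₀ u).some.length) ↔ ¬ Even w2.length := by
    intro w2
    rw [key u (hconn v₀ u).some (w2.append (SimpleGraph.Walk.cons huv.symm
      SimpleGraph.Walk.nil))]
    rw [SimpleGraph.Walk.length_append]
    simp [Nat.even_add, Nat.not_even_iff_odd, parity_simps]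
  have hA := hw (hconn v₀ v).some
  by_cases hB : Even ((hconn v₀ v).some.length)
  · rw [if_neg (by rw [hA]; exact fun h => h hB), if_pos hB]
    decide
  · rw [if_pos (hA.mpr hB), if_neg hB]
    decide

lemma exists_cyc (hconn : G.Connected) (hnb : ¬ G.Colorable 2) :
    ∃ (L : ℕ) (c : ZMod L → V), Odd L ∧ 3 ≤ L ∧ Function.Injective c ∧
      ∀ j, G.Adj (c j) (c (j + 1)) := by
  classical
  have hex := exists_odd_closed hconn hnb
  obtain ⟨hodd, f, hclosed, hadj⟩ := Nat.find_spec hex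
  set L := Nat.find hex with hLdef

  have hmin : ∀ m < L, ¬ (Odd m ∧ ∃ g : ℕ → V, g m = g 0 ∧ ∀ i < m, G.Adj (g i) (g (i + 1))) :=
    fun m hm => Nat.find_min hex hm
  have hL1 : L ≠ 1 := by
    intro h1
    have h2 := hadj 0 (by omega)
    rw [h1] at hclosed
    rw [hclosed] at h2
    exact G.loopless.irrefl _ h2
  have hL3 : 3 ≤ L := by
    obtain ⟨k, hk⟩ := hodd
    omega
  haveI : NeZero L := ⟨by omega⟩
  -- no-repeat property
  have norep : ∀ x y, x < y → y < L → f x ≠ f y := by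
    intro x y hxy hyL heq
    have hsplit : Odd (y - x) ∨ Odd (L - (y - x)) := by
      rcases Nat.even_or_odd (y - x) with h1 | h1
      · right
        obtain ⟨k, hk⟩ := hodd
        obtain ⟨k2, hk2⟩ := h1
        exact ⟨k - k2, by omega⟩
      · left; exact h1
    rcases hsplit with h1 | h1
    · apply hmin (y - x) (by omega)
      refine ⟨h1, fun i => f (x + i), ?_, ?_⟩
      · beta_reduce
        have e : x + (y - x) = y := by omega
        rw [e, ← heq, Nat.add_zero]
      · intro i hi
        beta_reduce
        have e : x + (i + 1) = x + i + 1 := by omega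
        rw [e]
        exact hadj (x + i) (by omega)
    · apply hmin (L - (y - x)) (by omega)
      refine ⟨h1, fun i => if i ≤ x then f i else f (i + (y - x)), ?_, ?_⟩
      · beta_reduce
        rw [if_neg (by omega : ¬ L - (y - x) ≤ x), if_pos (by omega : 0 ≤ x)]
        have e : L - (y - x) + (y - x) = L := by omega
        rw [e, hclosed]
      · intro i hi
        beta_reduce
        rcases Nat.lt_or_ge i x with hc1 | hc1
        · rw [if_pos (by omega : i ≤ x), if_pos (by omega : i + 1 ≤ x)]
          exact hadj i (by omega)
        · rcases Nat.eq_or_lt_of_le hc1 with hc2 | hc2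
          · rw [if_pos (by omega : i ≤ x), if_neg (by omega : ¬ i + 1 ≤ x), ← hc2, heq]
            have e : x + 1 + (y - x) = y + 1 := by omega
            rw [e]
            exact hadj y (by omega)
          · rw [if_neg (by omega : ¬ i ≤ x), if_neg (by omega : ¬ i + 1 ≤ x)]
            have e : i + 1 + (y - x) = i + (y - x) + 1 := by omega
            rw [e]
            exact hadj (i + (y - x)) (by omega)
  refine ⟨L, fun j => f j.val, hodd, hL3, ?_, ?_⟩
  · intro a b hab
    simp only at hab
    by_contra hne
    have hvalne : a.val ≠ b.val := fun h => hne (by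
      have := congrArg (fun x : ℕ => (x : ZMod L)) h
      simpa [ZMod.natCast_zmod_val] using this)
    rcases Nat.lt_or_ge a.val b.val with h1 | h1
    · exact norep _ _ h1 b.val_lt hab
    · exact norep _ _ (by omega) a.val_lt hab.symm
  · intro j
    simp only
    have hjv : j.val < L := j.val_lt
    have hval : (j + 1).val = (j.val + 1) % L := by
      have : j + 1 = ((j.val + 1 : ℕ) : ZMod L) := by
        push_cast [ZMod.natCast_zmod_val]; ring
      rw [this, ZMod.val_natCast]
    rcases Nat.lt_or_ge (j.val + 1) L with h1 | h1
    · rw [hval, Nat.mod_eq_of_lt h1]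
      exact hadj j.val hjv
    · have hL : j.val + 1 = L := by omega
      rw [hval, hL, Nat.mod_self]
      have := hadj j.val hjv
      rw [hL, hclosed] at this
      exact this
end Cyc


section Conn
variable {G : SimpleGraph V} {t L : ℕ} {c : ZMod L → V}

lemma window_shift {w : ℕ → V} (h1 : ∀ i, G.Adj (w i) (w (i + 1)))
    (h2 : ∀ i, 1 ≤ i → w (i + 1) ≠ w (i - 1)) (s : ℕ) :
    IsNBWalk G t (fun i => w (s + i)) := by
  constructor
  · intro i _
    beta_reduce
    rw [show s + (i + 1) = (s + i) + 1 by omega]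
    exact h1 (s + i)
  · intro i h0 _
    beta_reduce
    rw [show s + (i + 1) = (s + i) + 1 by omega, show s + (i - 1) = (s + i) - 1 by omega]
    exact h2 (s + i) (by omega)

lemma reach_infNB {w : ℕ → V} (h1 : ∀ i, G.Adj (w i) (w (i + 1)))
    (h2 : ∀ i, 1 ≤ i → w (i + 1) ≠ w (i - 1)) (k : ℕ) :
    (ntWalkGraph G t).Reachable (w 0) (w (k * t)) := by
  induction k with
  | zero => simpa using SimpleGraph.Reachable.refl (w 0)
  | succ n ih =>
    refine ih.trans ?_
    have hr := ntReach (t := t) (window_shift h1 h2 (n * t)) rfl rfl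
    rw [show (n + 1) * t = n * t + t by ring]
    simpa using hr

lemma path_getVert_inj {u v : V} (P : G.Walk u v) (hP : P.IsPath) :
    ∀ i j, i ≤ P.length → j ≤ P.length → P.getVert i = P.getVert j → i = j := by
  induction P with
  | nil => intro i j hi hj _; simp at hi hj; omega
  | @cons a b d h p ih =>
    rw [SimpleGraph.Walk.cons_isPath_iff] at hP
    intro i j hi hj hij
    rw [SimpleGraph.Walk.length_cons] at hi hj
    match i, j with
    | 0, 0 => rfl
    | 0, (j + 1) =>
      exfalso
      rw [SimpleGraph.Walk.getVert_zero, SimpleGraph.Walk.getVert_cons_succ] at hij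
      exact hP.2 (SimpleGraph.Walk.mem_support_iff_exists_getVert.mpr
        ⟨j, hij.symm, by omega⟩)
    | (i + 1), 0 =>
      exfalso
      rw [SimpleGraph.Walk.getVert_zero, SimpleGraph.Walk.getVert_cons_succ] at hij
      exact hP.2 (SimpleGraph.Walk.mem_support_iff_exists_getVert.mpr
        ⟨i, hij, by omega⟩)
    | (i + 1), (j + 1) =>
      rw [SimpleGraph.Walk.getVert_cons_succ, SimpleGraph.Walk.getVert_cons_succ] at hij
      have := ih hP.1 i j (by omega) (by omega) hij
      omega

lemma exists_reach_c (hconn : G.Connected) (hc : ∀ j, G.Adj (c j) (c (j + 1)))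
    (hinj : Function.Injective c) (h2 : (2 : ZMod L) ≠ 0) (ht : 1 ≤ t) (u : V) :
    ∃ j, (ntWalkGraph G t).Reachable u (c j) := by
  classical
  obtain ⟨P₀⟩ := hconn u (c 0)
  obtain ⟨P, hP⟩ : ∃ P : G.Walk u (c 0), P.IsPath := ⟨P₀.toPath.1, P₀.toPath.2⟩
  set p := P.length with hp
  set dir : ZMod L := if P.getVert (p - 1) = c 1 then -1 else 1 with hdir
  have hdir1 : dir = 1 ∨ dir = -1 := by
    rw [hdir]; split <;> simp
  have hstep : ∀ a : ZMod L, G.Adj (c a) (c (a + dir)) := by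
    intro a
    rcases hdir1 with h | h
    · rw [h]; exact hc a
    · rw [h, ← sub_eq_add_neg]
      have := (hc (a - 1)).symm
      simpa using this
  have hdirne : c dir ≠ P.getVert (p - 1) := by
    rw [hdir]
    split
    · rename_i hq
      rw [hq]
      exact (cne2 h2 hinj (by ring : (1 : ZMod L) - (-1) = 2)).symm
    · rename_i hq
      exact fun h => hq h.symm
  set w : ℕ → V := fun i => if i < p then P.getVert i else c (dir * ((i - p : ℕ) : ZMod L))
    with hw
  have hwpath : ∀ i, i < p → w i = P.getVert i := by
    intro i hi; rw [hw]; beta_reduce; rw [if_pos hi]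
  have hwcirc : ∀ i, p ≤ i → w i = c (dir * ((i - p : ℕ) : ZMod L)) := by
    intro i hi; rw [hw]; beta_reduce; rw [if_neg (by omega)]
  have hwp : w p = c 0 := by
    rw [hwcirc p le_rfl]; simp
  have hwp' : w p = P.getVert p := by
    rw [hwp, hp, SimpleGraph.Walk.getVert_length]
  have h1 : ∀ i, G.Adj (w i) (w (i + 1)) := by
    intro i
    rcases Nat.lt_or_ge (i + 1) p with hA | hA
    · rw [hwpath i (by omega), hwpath (i + 1) hA]
      exact P.adj_getVert_succ (by omega)
    · rcases Nat.eq_or_lt_of_le hA with hB | hB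
      · rw [hwpath i (by omega), ← hB, hwp', hB]
        exact P.adj_getVert_succ (by omega)
      · rw [hwcirc i (by omega), hwcirc (i + 1) (by omega)]
        rw [show (i + 1 - p : ℕ) = (i - p) + 1 by omega]
        push_cast
        rw [mul_add, mul_one]
        exact hstep _
  have h2' : ∀ i, 1 ≤ i → w (i + 1) ≠ w (i - 1) := by
    intro i hi
    rcases Nat.lt_or_ge (i + 1) p with hA | hA
    · rw [hwpath (i + 1) hA, hwpath (i - 1) (by omega)]
      intro heq
      have := path_getVert_inj P hP (i + 1) (i - 1) (by omega) (by omega) heq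
      omega
    · rcases Nat.eq_or_lt_of_le hA with hB | hB
      · rw [← hB, hwp', hwpath (i - 1) (by omega)]
        intro heq
        have := path_getVert_inj P hP p (i - 1) (by omega) (by omega) heq
        omega
      · rcases Nat.eq_or_lt_of_le (by omega : p ≤ i) with hC | hC
        · -- junction i = p, p ≥ 1
          rw [hwcirc (i + 1) (by omega), hwpath (i - 1) (by omega)]
          rw [show (i + 1 - p : ℕ) = 1 by omega, show (i - 1 : ℕ) = p - 1 by omega]
          simpa using hdirne
        · rw [hwcirc (i + 1) (by omega), hwcirc (i - 1) (by omega)]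
          rw [show (i + 1 - p : ℕ) = (i - 1 - p) + 2 by omega]
          rcases hdir1 with h | h
          · apply cne2 h2 hinj
            rw [h]
            push_cast
            ring
          · refine (cne2 h2 hinj ?_).symm
            rw [h]
            push_cast
            ring
  have hreach := reach_infNB (t := t) h1 h2' p
  have hw0 : w 0 = u := by
    rcases Nat.eq_zero_or_pos p with h0 | h0
    · have : u = c 0 := by
        have := SimpleGraph.Walk.eq_of_length_eq_zero (by rw [← hp, h0])
        exact this
      rw [hwcirc 0 (by omega), h0]
      simp [this]
    · rw [hwpath 0 h0]
      simp
  refine ⟨dir * ((p * t - p : ℕ) : ZMod L), ?_⟩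
  rw [← hwcirc (p * t) (Nat.le_mul_of_pos_right p (by omega)), ← hw0]
  exact hreach

lemma circ_reach (hc : ∀ j, G.Adj (c j) (c (j + 1))) (hinj : Function.Injective c)
    (hodd : Odd L) (hL3 : 3 ≤ L) (a : ZMod L) :
    (ntWalkGraph G t).Reachable (c a) (c (a + (t : ZMod L))) := by
  have hwalk := W1circ (t := t) hc hinj hodd hL3 a
  have := ntReach hwalk rfl rfl
  simpa using this

lemma creach_sub2 [Fintype V] (hmin : ∀ v, 3 ≤ degR G v)
    (hc : ∀ j, G.Adj (c j) (c (j + 1))) (hinj : Function.Injective c)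
    (hodd : Odd L) (hL3 : 3 ≤ L) (ht : 2 ≤ t) (j : ZMod L) :
    (ntWalkGraph G t).Reachable (c j) (c (j - 2)) := by
  have h2 := two_ne (L := L) hodd hL3
  set m : ZMod L := j + ((t - 1 : ℕ) : ZMod L) with hm
  obtain ⟨y, hy, hy1, hy2⟩ := exists_adj_ne hmin (c m) (c (m - 1)) (c (m + 1))
  have hcast1 : ((t - 1 : ℕ) : ZMod L) = (t : ZMod L) - 1 := by
    push_cast [Nat.cast_sub (by omega : 1 ≤ t)]; ring
  have hcast2 : ((t - 2 : ℕ) : ZMod L) = (t : ZMod L) - 2 := by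
    push_cast [Nat.cast_sub (by omega : 2 ≤ t)]; ring
  have RA : (ntWalkGraph G t).Reachable (c j) y := by
    have hwalk := W2exit hc hinj h2 ht j y (by rw [← hm]; exact hy)
      (by rw [hcast2]; rw [hm, hcast1] at hy1; convert hy1 using 2; ring)
    refine ntReach hwalk ?_ ?_
    · beta_reduce; rw [if_pos (by omega)]; simp
    · beta_reduce; rw [if_neg (by omega)]
  have RB : (ntWalkGraph G t).Reachable y (c (m + ((t - 1 : ℕ) : ZMod L))) := by
    have hwalk := W3enter hc hinj h2 ht m y hy.symm hy2
    refine ntReach hwalk ?_ ?_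
    · beta_reduce; rw [if_pos rfl]
    · beta_reduce; rw [if_neg (by omega), show (t - 1 : ℕ) = t - 1 by rfl]
  have RC : (ntWalkGraph G t).Reachable (c (j - 2)) (c (m + ((t - 1 : ℕ) : ZMod L))) := by
    have s1 := circ_reach (t := t) hc hinj hodd hL3 (j - 2)
    have s2 := circ_reach (t := t) hc hinj hodd hL3 (j - 2 + (t : ZMod L))
    have : m + ((t - 1 : ℕ) : ZMod L) = j - 2 + (t : ZMod L) + (t : ZMod L) := by
      rw [hm, hcast1]; ring
    rw [this]
    exact s1.trans s2
  exact RA.trans (RB.trans RC.symm)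

lemma creach_all [Fintype V] (hmin : ∀ v, 3 ≤ degR G v)
    (hc : ∀ j, G.Adj (c j) (c (j + 1))) (hinj : Function.Injective c)
    (hodd : Odd L) (hL3 : 3 ≤ L) (ht : 2 ≤ t) (j i : ZMod L) :
    (ntWalkGraph G t).Reachable (c j) (c i) := by
  haveI : NeZero L := ⟨by omega⟩
  have iter : ∀ (n : ℕ) (a : ZMod L),
      (ntWalkGraph G t).Reachable (c a) (c (a - 2 * (n : ZMod L))) := by
    intro n
    induction n with
    | zero => intro a; simpa using SimpleGraph.Reachable.refl (c a)
    | succ k ihk =>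
      intro a
      have h1 := ihk a
      have h2 := creach_sub2 hmin hc hinj hodd hL3 ht (a - 2 * (k : ZMod L))
      have : a - 2 * ((k + 1 : ℕ) : ZMod L) = a - 2 * (k : ZMod L) - 2 := by
        push_cast; ring
      rw [this]
      exact h1.trans h2
  set n : ℕ := (L + 1) / 2 * (j - i).val with hn
  have key : 2 * (n : ZMod L) = j - i := by
    have e0 : 2 * ((L + 1) / 2) = L + 1 := by obtain ⟨k, hk⟩ := hodd; omega
    have e1 : (2 * n : ℕ) = (L + 1) * (j - i).val := by rw [hn, ← mul_assoc, e0]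
    have : ((2 * n : ℕ) : ZMod L) = (((L + 1) * (j - i).val : ℕ) : ZMod L) := by rw [e1]
    push_cast at this
    rw [ZMod.natCast_self] at this
    rw [ZMod.natCast_zmod_val] at this
    simpa using this
  have := iter n j
  rw [key] at this
  simpa using this
end Conn

section NonBip
variable {G : SimpleGraph V} {t L : ℕ} {c : ZMod L → V}

lemma nt_one_eq : ntWalkGraph G 1 = G := by
  ext u v
  simp only [ntWalkGraph, SimpleGraph.fromRel_adj]
  constructor
  · rintro ⟨hne, h | h⟩ <;> obtain ⟨w, h0, h1, hW⟩ := h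
    · have := hW.1 0 (by omega); rwa [h0, h1] at this
    · have := hW.1 0 (by omega); rw [h0, h1] at this; exact this.symm
  · intro h
    refine ⟨h.ne, Or.inl ⟨fun i => if i = 0 then u else v, by simp, by simp, ?_, ?_⟩⟩
    · intro i hi
      have hi0 : i = 0 := by omega
      subst hi0
      simpa using h
    · intro i h1 h2; omega

lemma fin2_ne_of_ne {a b d : Fin 2} (h1 : a ≠ b) (h2 : d ≠ b) : a = d := by
  exact fin2_eq_of_ne a b d h1 h2

lemma exists_two_adj_ne [Fintype V] (hmin : ∀ v, 3 ≤ degR G v) (v p : V) :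
    ∃ x1 x2, G.Adj v x1 ∧ G.Adj v x2 ∧ x1 ≠ x2 ∧ x1 ≠ p ∧ x2 ≠ p := by
  have h3 : 2 < (Finset.univ.filter (fun u => G.Adj v u)).card := hmin v
  rw [Finset.two_lt_card] at h3
  obtain ⟨a, ha, b, hb, d, hd, hab, had, hbd⟩ := h3
  simp only [Finset.mem_filter] at ha hb hd
  by_cases hap : a = p
  · exact ⟨b, d, hb.2, hd.2, hbd, fun h => hab (by rw [hap, h]), fun h => had (by rw [hap, h])⟩
  · by_cases hbp : b = p
    · exact ⟨a, d, ha.2, hd.2, had, hap, fun h => hbd (by rw [hbp, h])⟩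
    · exact ⟨a, b, ha.2, hb.2, hab, hap, hbp⟩

lemma fin2_zero : ∀ a b : Fin 2, ¬ a = 0 → a ≠ b → b = 0 := by decide

lemma countcase (C : (ntWalkGraph G t).Coloring (Fin 2))
    (hc : ∀ j, G.Adj (c j) (c (j + 1))) (hinj : Function.Injective c)
    (hodd : Odd L) (hL3 : 3 ≤ L) (ht0 : ((t : ℕ) : ZMod L) ≠ 0) : False := by
  haveI : NeZero L := ⟨by omega⟩
  classical
  set r : ZMod L := ((t : ℕ) : ZMod L) with hr
  have hadjstep : ∀ x : ZMod L, (ntWalkGraph G t).Adj (c x) (c (x + r)) := by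
    intro x
    refine ntAdj (W1circ (t := t) hc hinj hodd hL3 x) (by simp) (by simp [hr]) ?_
    apply cne hinj
    intro h
    apply ht0
    have : x + r - x = 0 := by rw [← h]; ring
    rw [← this, hr]; ring
  have hstep : ∀ x : ZMod L, C (c (x + r)) ≠ C (c x) := fun x => (C.valid (hadjstep x)).symm
  set A : Finset (ZMod L) := Finset.univ.filter (fun x => C (c x) = 0) with hA
  set B : Finset (ZMod L) := Finset.univ.filter (fun x => ¬ (C (c x) = 0)) with hB
  have himg : A.image (fun x => x + r) = B := by
    ext z
    simp only [hA, hB, Finset.mem_image, Finset.mem_filter, Finset.mem_univ, true_and]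
    constructor
    · rintro ⟨x, hx, rfl⟩
      intro h
      exact hstep x (by rw [h, hx])
    · intro hz
      refine ⟨z - r, ?_, by ring⟩
      have h1 : C (c z) ≠ C (c (z - r)) := by
        have := hstep (z - r)
        rwa [show z - r + r = z by ring] at this
      exact fin2_zero _ _ hz h1
  have hcard : A.card = B.card := by
    rw [← himg]
    exact (Finset.card_image_of_injective A (add_left_injective r)).symm
  have hsplit : A.card + B.card = L := by
    rw [hA, hB, Finset.card_filter_add_card_filter_not]
    simp [ZMod.card]
  obtain ⟨k, hk⟩ := hodd
  omega
end NonBip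

section ZeroCase
variable {G : SimpleGraph V} {t L : ℕ} {c : ZMod L → V}

lemma D1half (C : (ntWalkGraph G t).Coloring (Fin 2))
    (hc : ∀ j, G.Adj (c j) (c (j + 1))) (hinj : Function.Injective c)
    (h2 : (2 : ZMod L) ≠ 0) (ht : 2 ≤ t) (ht0 : ((t : ℕ) : ZMod L) = 0)
    (m : ZMod L) (y : V) (hy : G.Adj (c m) y) (hy1 : y ≠ c (m - 1)) (hy2 : y ≠ c (m + 1)) :
    C y ≠ C (c (m + 1)) := by
  have hcast1 : ((t - 1 : ℕ) : ZMod L) = -1 := by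
    push_cast [Nat.cast_sub (by omega : 1 ≤ t)]; rw [ht0]; ring
  have hcast2 : ((t - 2 : ℕ) : ZMod L) = -2 := by
    push_cast [Nat.cast_sub (by omega : 2 ≤ t)]; rw [ht0]; ring
  have e1 : (m + 1) + ((t - 1 : ℕ) : ZMod L) = m := by rw [hcast1]; ring
  have e2 : (m + 1) + ((t - 2 : ℕ) : ZMod L) = m - 1 := by rw [hcast2]; ring
  have hwalk := W2exit hc hinj h2 ht (m + 1) y (by rw [e1]; exact hy) (by rw [e2]; exact hy1)
  have hadj : (ntWalkGraph G t).Adj (c (m + 1)) y := by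
    refine ntAdj hwalk ?_ ?_ (fun h => hy2 h.symm)
    · beta_reduce; rw [if_pos (by omega : 0 < t)]; simp
    · beta_reduce; rw [if_neg (by omega : ¬ t < t)]
  exact (C.valid hadj).symm

lemma D1 (C : (ntWalkGraph G t).Coloring (Fin 2))
    (hc : ∀ j, G.Adj (c j) (c (j + 1))) (hinj : Function.Injective c)
    (h2 : (2 : ZMod L) ≠ 0) (ht : 2 ≤ t) (ht0 : ((t : ℕ) : ZMod L) = 0)
    (m : ZMod L) (y : V) (hy : G.Adj (c m) y) (hy1 : y ≠ c (m - 1)) (hy2 : y ≠ c (m + 1)) :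
    C y ≠ C (c (m + 1)) ∧ C y ≠ C (c (m - 1)) := by
  refine ⟨D1half C hc hinj h2 ht ht0 m y hy hy1 hy2, ?_⟩
  have hc' : ∀ j : ZMod L, G.Adj ((fun x => c (-x)) j) ((fun x => c (-x)) (j + 1)) := by
    intro j
    show G.Adj (c (-j)) (c (-(j + 1)))
    have h := (hc (-(j + 1))).symm
    rwa [show -(j + 1) + 1 = -j by ring] at h
  have hinj' : Function.Injective (fun x : ZMod L => c (-x)) :=
    fun a b h => neg_injective (hinj h)
  have hres := D1half (c := fun x => c (-x)) C hc' hinj' h2 ht ht0 (-m) y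
    (by show G.Adj (c (-(-m))) y; rwa [neg_neg])
    (by show y ≠ c (-(-m - 1)); rwa [show -(-m - 1) = m + 1 by ring])
    (by show y ≠ c (-(-m + 1)); rwa [show -(-m + 1) = m - 1 by ring])
  show C y ≠ C (c (m - 1))
  have e : (fun x : ZMod L => c (-x)) (-m + 1) = c (m - 1) := by
    show c (-(-m + 1)) = c (m - 1)
    rw [show -(-m + 1) = m - 1 by ring]
  rwa [show c (-(-m + 1)) = c (m - 1) from e] at hres

lemma D4half (C : (ntWalkGraph G t).Coloring (Fin 2))
    (hc : ∀ j, G.Adj (c j) (c (j + 1))) (hinj : Function.Injective c)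
    (h2 : (2 : ZMod L) ≠ 0) (ht3 : 3 ≤ t) (ht0 : ((t : ℕ) : ZMod L) = 0)
    (m : ZMod L) (y x : V) (hy : G.Adj (c m) y) (hy1 : y ≠ c (m - 1))
    (hx : G.Adj y x) (hx2 : x ≠ c m) (hxne : x ≠ c (m + 2)) :
    C x ≠ C (c (m + 2)) := by
  have hcast2 : ((t - 2 : ℕ) : ZMod L) = -2 := by
    push_cast [Nat.cast_sub (by omega : 2 ≤ t)]; rw [ht0]; ring
  have hcast3 : ((t - 3 : ℕ) : ZMod L) = -3 := by
    push_cast [Nat.cast_sub (by omega : 3 ≤ t)]; rw [ht0]; ring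
  have e1 : (m + 2) + ((t - 2 : ℕ) : ZMod L) = m := by rw [hcast2]; ring
  have e2 : (m + 2) + ((t - 3 : ℕ) : ZMod L) = m - 1 := by rw [hcast3]; ring
  have hwalk := W4exit2 hc hinj h2 ht3 (m + 2) y x (by rw [e1]; exact hy)
    (by rw [e2]; exact hy1) hx (by rw [e1]; exact hx2)
  have hadj : (ntWalkGraph G t).Adj (c (m + 2)) x := by
    refine ntAdj hwalk ?_ ?_ (fun h => hxne h.symm)
    · beta_reduce; rw [if_pos (by omega : 0 ≤ t - 2)]; simp
    · beta_reduce; rw [if_neg (by omega : ¬ t ≤ t - 2), if_neg (by omega : ¬ t = t - 1)]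
  exact (C.valid hadj).symm

lemma zerocase [Fintype V] (C : (ntWalkGraph G t).Coloring (Fin 2))
    (hmin : ∀ v, 3 ≤ degR G v)
    (hc : ∀ j, G.Adj (c j) (c (j + 1))) (hinj : Function.Injective c)
    (hodd : Odd L) (hL3 : 3 ≤ L) (ht1 : 1 ≤ t)
    (ht0 : ((t : ℕ) : ZMod L) = 0) : False := by
  haveI : NeZero L := ⟨by omega⟩
  have h2 := two_ne (L := L) hodd hL3
  have h4 := four_ne (L := L) hodd hL3
  have hdvd : L ∣ t := (ZMod.natCast_eq_zero_iff t L).mp ht0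
  have ht3 : 3 ≤ t := le_trans hL3 (Nat.le_of_dvd (by omega) hdvd)
  have ht2 : 2 ≤ t := by omega
  have hc' : ∀ j : ZMod L, G.Adj ((fun x => c (-x)) j) ((fun x => c (-x)) (j + 1)) := by
    intro j
    show G.Adj (c (-j)) (c (-(j + 1)))
    have h := (hc (-(j + 1))).symm
    rwa [show -(j + 1) + 1 = -j by ring] at h
  have hinj' : Function.Injective (fun x : ZMod L => c (-x)) :=
    fun a b h => neg_injective (hinj h)
  have D2 : ∀ m : ZMod L, C (c (m + 1)) = C (c (m - 1)) := by
    intro m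
    obtain ⟨y, hy, hy1, hy2⟩ := exists_adj_ne hmin (c m) (c (m - 1)) (c (m + 1))
    obtain ⟨d1, d2⟩ := D1 C hc hinj h2 ht2 ht0 m y hy hy1 hy2
    exact fin2_eq_of_ne (C (c (m + 1))) (C y) (C (c (m - 1)))
      (fun h => d1 h.symm) (fun h => d2 h.symm)
  have step2 : ∀ m : ZMod L, C (c m) = C (c (m - 2)) := by
    intro m
    have h := D2 (m - 1)
    rwa [show m - 1 + 1 = m by ring, show m - 1 - 1 = m - 2 by ring] at h
  have tau : ∀ m i : ZMod L, C (c m) = C (c i) := by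
    have iter : ∀ (n : ℕ) (m : ZMod L), C (c m) = C (c (m - 2 * (n : ZMod L))) := by
      intro n
      induction n with
      | zero => intro m; simp
      | succ k ih =>
        intro m
        rw [ih m, show m - 2 * ((k + 1 : ℕ) : ZMod L) = (m - 2 * (k : ZMod L)) - 2 by
          push_cast; ring]
        exact step2 _
    intro m i
    set n : ℕ := (L + 1) / 2 * (m - i).val with hn
    have e0 : 2 * ((L + 1) / 2) = L + 1 := by obtain ⟨k, hk⟩ := hodd; omega
    have key : 2 * (n : ZMod L) = m - i := by
      have e1 : (2 * n : ℕ) = (L + 1) * (m - i).val := by rw [hn, ← mul_assoc, e0]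
      have e2 : ((2 * n : ℕ) : ZMod L) = (((L + 1) * (m - i).val : ℕ) : ZMod L) := by rw [e1]
      push_cast at e2
      rw [ZMod.natCast_self, ZMod.natCast_zmod_val] at e2
      simpa using e2
    have h := iter n m
    rw [key] at h
    simpa using h
  have hoffcol : ∀ (m : ZMod L) (y : V), G.Adj (c m) y → y ≠ c (m - 1) → y ≠ c (m + 1) →
      C y ≠ C (c 0) := by
    intro m y hy hy1 hy2
    have h := (D1 C hc hinj h2 ht2 ht0 m y hy hy1 hy2).1
    rwa [tau (m + 1) 0] at h
  have hD4 : ∀ (m : ZMod L) (y x : V), G.Adj (c m) y → y ≠ c (m - 1) → y ≠ c (m + 1) →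
      G.Adj y x → x ≠ c m → C x ≠ C (c 0) := by
    intro m y x hy hy1 hy2 hx hx2
    by_cases hxe : x = c (m + 2)
    · have hxne' : x ≠ (fun x : ZMod L => c (-x)) (-m + 2) := by
        show x ≠ c (-(-m + 2))
        rw [show -(-m + 2) = m - 2 by ring, hxe]
        apply cne hinj
        intro h
        apply h4
        have : (m + 2) - (m - 2) = 4 := by ring
        rw [h] at this
        rw [← this]; ring
      have hres := D4half (c := fun x => c (-x)) C hc' hinj' h2 ht3 ht0 (-m) y x
        (by show G.Adj (c (-(-m))) y; rwa [neg_neg])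
        (by show y ≠ c (-(-m - 1)); rwa [show -(-m - 1) = m + 1 by ring])
        hx
        (by show x ≠ c (-(-m)); rwa [neg_neg])
        hxne'
      have e : (fun x : ZMod L => c (-x)) (-m + 2) = c (m - 2) := by
        show c (-(-m + 2)) = c (m - 2)
        rw [show -(-m + 2) = m - 2 by ring]
      rw [show c (-(-m + 2)) = c (m - 2) from e] at hres
      rwa [tau (m - 2) 0] at hres
    · have h := D4half C hc hinj h2 ht3 ht0 m y x hy hy1 hx hx2 hxe
      rwa [tau (m + 2) 0] at h
  rcases Nat.lt_or_ge t 4 with ht4 | ht4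
  · -- t = 3
    have ht3' : t = 3 := by omega
    subst ht3'
    obtain ⟨z, hz, hz1, hz2⟩ := exists_adj_ne hmin (c 0) (c (0 - 1)) (c (0 + 1))
    by_cases hex : ∃ y, G.Adj (c 0) y ∧ y ≠ c (0 - 1) ∧ y ≠ c (0 + 1) ∧ y ≠ z
    · obtain ⟨y, hy, hy1, hy2, hyz⟩ := hex
      obtain ⟨x, hx, hx1, hx2⟩ := exists_adj_ne hmin z (c 0) y
      have hwalk := W0 (G := G) hy.symm hz hx (fun h => hyz h.symm) hx1
      have hadj : (ntWalkGraph G 3).Adj y x := by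
        refine ntAdj hwalk ?_ ?_ (fun h => hx2 h.symm)
        · beta_reduce; rw [if_pos rfl]
        · beta_reduce
          rw [if_neg (by omega : ¬ (3 : ℕ) = 0), if_neg (by omega : ¬ (3 : ℕ) = 1),
            if_neg (by omega : ¬ (3 : ℕ) = 2)]
      have c1 := C.valid hadj
      have c2 := hoffcol 0 y hy hy1 hy2
      have c3 := hD4 0 z x hz hz1 hz2 hx hx1
      exact c1 (fin2_eq_of_ne (C y) (C (c 0)) (C x) c2 c3)
    · push_neg at hex
      obtain ⟨x1, x2, hzx1, hzx2, h12, h1c, h2c⟩ := exists_two_adj_ne hmin z (c 0)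
      obtain ⟨w, hw, hwz, hwx1⟩ := exists_adj_ne hmin x2 z x1
      have hCx1 : C x1 ≠ C (c 0) := hD4 0 z x1 hz hz1 hz2 hzx1 h1c
      have hCx2 : C x2 ≠ C (c 0) := hD4 0 z x2 hz hz1 hz2 hzx2 h2c
      have hwc0 : w ≠ c 0 := by
        intro h
        have hw' : G.Adj (c 0) x2 := by rw [← h]; exact hw.symm
        by_cases e1 : x2 = c (0 - 1)
        · exact hCx2 (by rw [e1, tau (0 - 1) 0])
        by_cases e2 : x2 = c (0 + 1)
        · exact hCx2 (by rw [e2, tau (0 + 1) 0])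
        exact hzx2.ne ((hex x2 hw' e1 e2).symm)
      have hwalk1 := W0 (G := G) hzx1.symm hzx2 hw (fun h => h12 h.symm) hwz
      have hadj1 : (ntWalkGraph G 3).Adj x1 w := by
        refine ntAdj hwalk1 ?_ ?_ (fun h => hwx1 h.symm)
        · beta_reduce; rw [if_pos rfl]
        · beta_reduce
          rw [if_neg (by omega : ¬ (3 : ℕ) = 0), if_neg (by omega : ¬ (3 : ℕ) = 1),
            if_neg (by omega : ¬ (3 : ℕ) = 2)]
      have hwalk2 := W0 (G := G) hz hzx2 hw h2c hwz
      have hadj2 : (ntWalkGraph G 3).Adj (c 0) w := by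
        refine ntAdj hwalk2 ?_ ?_ (fun h => hwc0 h.symm)
        · beta_reduce; rw [if_pos rfl]
        · beta_reduce
          rw [if_neg (by omega : ¬ (3 : ℕ) = 0), if_neg (by omega : ¬ (3 : ℕ) = 1),
            if_neg (by omega : ¬ (3 : ℕ) = 2)]
      exact hCx1 (fin2_eq_of_ne (C x1) (C w) (C (c 0)) (C.valid hadj1) (C.valid hadj2))
  · -- t ≥ 4
    have hcast3 : ((t - 3 : ℕ) : ZMod L) = -3 := by
      push_cast [Nat.cast_sub (by omega : 3 ≤ t)]; rw [ht0]; ring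
    have hcast4 : ((t - 4 : ℕ) : ZMod L) = -4 := by
      push_cast [Nat.cast_sub (by omega : 4 ≤ t)]; rw [ht0]; ring
    obtain ⟨y₀, hy0, hy01, hy02⟩ := exists_adj_ne hmin (c 3) (c (3 - 1)) (c (3 + 1))
    obtain ⟨y₁, hy1, hy11, hy12⟩ := exists_adj_ne hmin (c 0) (c (0 - 1)) (c (0 + 1))
    obtain ⟨x, hx, hxc, hxy0⟩ := exists_adj_ne hmin y₁ (c 0) y₀
    have e3 : (3 : ZMod L) + ((t - 3 : ℕ) : ZMod L) = 0 := by rw [hcast3]; ring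
    have e4 : (3 : ZMod L) + ((t - 4 : ℕ) : ZMod L) = 0 - 1 := by rw [hcast4]; ring
    have hwalk := W5 hc hinj h2 ht4 3 y₀ y₁ x hy0.symm hy02
      (by rw [e3]; exact hy1) (by rw [e4]; exact hy11) hx (by rw [e3]; exact hxc)
    have hadj : (ntWalkGraph G t).Adj y₀ x := by
      refine ntAdj hwalk ?_ ?_ (fun h => hxy0 h.symm)
      · beta_reduce; rw [if_pos rfl]
      · beta_reduce
        rw [if_neg (by omega : ¬ t = 0), if_neg (by omega : ¬ t ≤ t - 2),
          if_neg (by omega : ¬ t = t - 1)]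
    have c1 := C.valid hadj
    have c2 := hoffcol 3 y₀ hy0 hy01 hy02
    have c3 := hD4 0 y₁ x hy1 hy11 hy12 hx hxc
    exact c1 (fin2_eq_of_ne (C y₀) (C (c 0)) (C x) c2 c3)
end ZeroCase


theorem statement7 {V : Type} [Fintype V] (G : SimpleGraph V)
    (hconn : G.Connected) (hnb : ¬ G.Colorable 2) (hmin : ∀ v, 3 ≤ degR G v)
    (t : ℕ) (ht : 1 ≤ t) :
    (ntWalkGraph G t).Connected ∧ ¬ (ntWalkGraph G t).Colorable 2 := by
  rcases Nat.lt_or_ge t 2 with h2t | h2t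
  · have h1 : t = 1 := by omega
    subst h1
    rw [nt_one_eq]
    exact ⟨hconn, hnb⟩
  obtain ⟨L, c, hodd, hL3, hinj, hc⟩ := exists_cyc hconn hnb
  have h2 := two_ne (L := L) hodd hL3
  constructor
  · haveI := hconn.nonempty
    refine SimpleGraph.Connected.mk ?_
    intro u v
    obtain ⟨j, hj⟩ := exists_reach_c (t := t) hconn hc hinj h2 (by omega) u
    obtain ⟨i, hi⟩ := exists_reach_c (t := t) hconn hc hinj h2 (by omega) v
    exact hj.trans ((creach_all hmin hc hinj hodd hL3 h2t j i).trans hi.symm)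
  · intro hcol
    obtain ⟨C⟩ := hcol
    by_cases ht0 : ((t : ℕ) : ZMod L) = 0
    · exact zerocase C hmin hc hinj hodd hL3 ht ht0
    · exact countcase C hc hinj hodd hL3 ht0


end PaperStmt
end
end

section
/- Let d ≥ 3, let S be a multiset of nonnegative integers not all zero, and let G be a finite connected non-bipartite d-regular graph with girth greater than 3·max(S). Then the polygraph G_S is connected and non-bipartite. -/
open scoped Classical
open Finset Polynomial

noncomputable section

namespace PaperStmt

variable {V : Type}

/-!
If every vertex has degree at least three and the girth exceeds `2k`, non-backtracking walks of
length `k` are geodesics; extending such walks shows that there are vertices at every distance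
`k`, and that any two neighbours of a vertex have a common vertex at distance `k`. Hence moving
one coordinate of a tuple two steps along `G` is two steps in `G_S`: the moving coordinate carries
a positive entry of `S` and goes to a vertex at that distance from both of its positions, the
others go out to their prescribed distance and come back. As `G` is connected and non-bipartite,
any two vertices are joined by an even walk, so changing the coordinates one at a time joins any
two tuples by an even walk of `G_S`. Thus `G_S` is connected, and an edge of `G_S` followed by an
even walk back is an odd closed walk.
-/

open SimpleGraph

section Girth

variable {G : SimpleGraph V}

lemma isAcyclic_fromEdgeSet_of_length_lt_egirth {u v : V} (c : G.Walk u v)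
    (hc : (c.length : ℕ∞) < G.egirth) : (fromEdgeSet c.edgeSet).IsAcyclic := by
  intro a C hC
  have hle : fromEdgeSet c.edgeSet ≤ G :=
    (fromEdgeSet_le G).2 fun e he => c.edges_subset_edgeSet he.1
  have hsub : C.edges ⊆ c.edges := fun e he => by
    have := C.edges_subset_edgeSet he
    rw [edgeSet_fromEdgeSet] at this
    exact this.1
  have hCc : C.length ≤ c.length := by
    simpa using (hC.edges_nodup.subperm hsub).length_le
  have := egirth_le_length (hC.mapLe hle)
  rw [Walk.length_mapLe] at this
  exact absurd (this.trans (by exact_mod_cast hCc)) (not_le.2 hc)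

lemma isChain_edges_cons {u v w : V} (h : G.Adj u v) {p : G.Walk v w}
    (hp : List.IsChain (· ≠ ·) p.edges) (hu : p.Nil ∨ p.snd ≠ u) :
    List.IsChain (· ≠ ·) (Walk.cons h p).edges := by
  cases p with
  | nil => simp
  | cons h' q =>
    simp only [Walk.edges_cons] at hp ⊢
    refine List.isChain_cons_cons.2 ⟨?_, hp⟩
    simp only [Walk.not_nil_cons, Walk.snd_cons, false_or] at hu
    rw [Ne, Sym2.eq_iff]
    rintro (⟨rfl, rfl⟩ | ⟨rfl, -⟩) <;> exact hu rfl

/-- In a graph of girth `> 2n`, a non-backtracking walk of length `n` is a geodesic: together with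
a geodesic between its ends it spans a forest, in which both are the unique path. -/
lemma dist_eq_length_of_isChain_edges {u v : V} (p : G.Walk u v)
    (hp : List.IsChain (· ≠ ·) p.edges) (hg : ((2 * p.length : ℕ) : ℕ∞) < G.egirth) :
    G.dist u v = p.length := by
  obtain ⟨q, hq⟩ := p.reachable.exists_walk_length_eq_dist
  set c := p.append q.reverse
  have hqp : q.length ≤ p.length := hq ▸ dist_le p
  have hH : (fromEdgeSet c.edgeSet).IsAcyclic := by
    refine isAcyclic_fromEdgeSet_of_length_lt_egirth c (lt_of_le_of_lt ?_ hg)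
    simp only [c, Walk.length_append, Walk.length_reverse]
    exact_mod_cast (by omega : p.length + q.length ≤ 2 * p.length)
  have hmem : ∀ e ∈ c.edges, e ∈ (fromEdgeSet c.edgeSet).edgeSet := fun e he => by
    rw [edgeSet_fromEdgeSet]
    exact ⟨he, G.not_isDiag_of_mem_edgeSet (c.edges_subset_edgeSet he)⟩
  have hpc : ∀ e ∈ p.edges, e ∈ (fromEdgeSet c.edgeSet).edgeSet := fun e he =>
    hmem e (by simp [c, Walk.edges_append, he])
  have hqc : ∀ e ∈ q.edges, e ∈ (fromEdgeSet c.edgeSet).edgeSet := fun e he =>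
    hmem e (by simp [c, Walk.edges_append, Walk.edges_reverse, he])
  have hpq := (hH.subsingleton_path u v).elim
    ⟨p.transfer _ hpc, (hH.isPath_iff_isChain _).2 (by rwa [Walk.edges_transfer])⟩
    ⟨q.transfer _ hqc, (q.isPath_of_length_eq_dist hq).transfer hqc⟩
  have := congrArg (fun r : (fromEdgeSet c.edgeSet).Path u v => r.1.length) hpq
  simp only [Walk.length_transfer] at this
  rw [← hq, this]

end Girth

section Branching

variable {G : SimpleGraph V} (hdeg : ∀ v a b : V, ∃ x, G.Adj v x ∧ x ≠ a ∧ x ≠ b)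
include hdeg

lemma exists_walk_isChain_snd_ne (k : ℕ) (u a b : V) :
    ∃ (w : V) (p : G.Walk u w), p.length = k + 1 ∧ List.IsChain (· ≠ ·) p.edges ∧
      p.snd ≠ a ∧ p.snd ≠ b := by
  induction k generalizing u a b with
  | zero =>
    obtain ⟨x, hx, hxa, hxb⟩ := hdeg u a b
    exact ⟨x, Walk.cons hx Walk.nil, rfl, by simp, by simpa using hxa, by simpa using hxb⟩
  | succ k ih =>
    obtain ⟨x, hx, hxa, hxb⟩ := hdeg u a b
    obtain ⟨w, p, hlen, hp, hpu, -⟩ := ih x u u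
    exact ⟨w, Walk.cons hx p, by simp [hlen], isChain_edges_cons hx hp (Or.inr hpu),
      by simpa using hxa, by simpa using hxb⟩

/-- Two neighbours `u`, `z` of `y` are both at distance `k` from the far end of a
non-backtracking walk of length `k - 1` leaving `y` through a third neighbour. -/
lemma exists_dist_eq_dist_eq {u y z : V} (hu : G.Adj u y) (hz : G.Adj z y) {k : ℕ}
    (hk : 1 ≤ k) (hg : ((2 * k : ℕ) : ℕ∞) < G.egirth) :
    ∃ w, G.dist u w = k ∧ G.dist z w = k := by
  obtain ⟨m, rfl⟩ := Nat.exists_eq_add_of_le' hk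
  cases m with
  | zero => exact ⟨y, dist_eq_one_iff_adj.2 hu, dist_eq_one_iff_adj.2 hz⟩
  | succ m =>
    obtain ⟨w, p, hlen, hp, hpu, hpz⟩ := exists_walk_isChain_snd_ne hdeg m y u z
    have hdist : ∀ {t} (ht : G.Adj t y), p.snd ≠ t → G.dist t w = m + 1 + 1 := by
      intro t ht hpt
      rw [dist_eq_length_of_isChain_edges (Walk.cons ht p) (isChain_edges_cons ht hp (Or.inr hpt))
        (by simpa [hlen] using hg), Walk.length_cons, hlen]
    exact ⟨w, hdist hu hpu, hdist hz hpz⟩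

lemma exists_dist_eq (u : V) {k : ℕ} (hg : ((2 * k : ℕ) : ℕ∞) < G.egirth) :
    ∃ w, G.dist u w = k := by
  rcases Nat.eq_zero_or_pos k with rfl | hk
  · exact ⟨u, dist_self⟩
  · obtain ⟨y, hy, -⟩ := hdeg u u u
    obtain ⟨w, hw, -⟩ := exists_dist_eq_dist_eq hdeg hy hy hk hg
    exact ⟨w, hw⟩

end Branching

lemma exists_adj_ne_ne_of_three_le_degR [Fintype V] {G : SimpleGraph V} {v : V}
    (hv : 3 ≤ degR G v) (a b : V) : ∃ x, G.Adj v x ∧ x ≠ a ∧ x ≠ b := by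
  set s := univ.filter (fun u => G.Adj v u)
  have hcard : 0 < ((s.erase a).erase b).card := by
    have h1 := pred_card_le_card_erase (s := s) (a := a)
    have h2 := pred_card_le_card_erase (s := s.erase a) (a := b)
    have h3 : 3 ≤ s.card := hv
    omega
  obtain ⟨x, hx⟩ := card_pos.1 hcard
  simp only [s, mem_erase, mem_filter, mem_univ, true_and] at hx
  exact ⟨x, hx.2.2, hx.2.1, hx.1⟩

section Parity

variable {α : Type} {H : SimpleGraph α}

def EvenlyReachable (H : SimpleGraph α) (x y : α) : Prop :=
  ∃ p : H.Walk x y, Even p.length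

lemma EvenlyReachable.refl (x : α) : EvenlyReachable H x x := ⟨Walk.nil, Even.zero⟩

lemma EvenlyReachable.trans {x y z : α} (hxy : EvenlyReachable H x y)
    (hyz : EvenlyReachable H y z) : EvenlyReachable H x z := by
  obtain ⟨p, hp⟩ := hxy
  obtain ⟨q, hq⟩ := hyz
  exact ⟨p.append q, by rw [Walk.length_append]; exact hp.add hq⟩

lemma EvenlyReachable.of_adj_adj {x y z : α} (hxy : H.Adj x y) (hyz : H.Adj y z) :
    EvenlyReachable H x z :=
  ⟨Walk.cons hxy (Walk.cons hyz Walk.nil), by simp⟩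

lemma EvenlyReachable.induction {Q : α → α → Prop} (refl : ∀ a, Q a a)
    (step : ∀ {a m c b}, H.Adj a m → H.Adj m c → Q c b → Q a b) {a b : α}
    (hab : EvenlyReachable H a b) : Q a b := by
  obtain ⟨p, hp⟩ := hab
  suffices (Even p.length → Q a b) ∧ (Odd p.length → ∀ a', H.Adj a' a → Q a' b) from this.1 hp
  clear hp
  induction p with
  | nil => exact ⟨fun _ => refl _, fun h => absurd h (by simp)⟩
  | cons h p ih =>
    simp only [Walk.length_cons, Nat.even_add_one, Nat.odd_add_one, Nat.not_even_iff_odd,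
      Nat.not_odd_iff_even]
    exact ⟨fun hodd => ih.2 hodd _ h,
      fun heven a' ha' => step ha' h (ih.1 heven)⟩

lemma evenlyReachable_of_not_colorable_two (hconn : H.Connected) (hnb : ¬ H.Colorable 2)
    (a b : α) : EvenlyReachable H a b := by
  simp only [two_colorable_iff_forall_loop_even, not_forall, Nat.not_even_iff_odd] at hnb
  obtain ⟨v, c, hc⟩ := hnb
  obtain ⟨w⟩ := hconn.preconnected a b
  by_cases hw : Even w.length
  · exact ⟨w, hw⟩
  obtain ⟨r⟩ := hconn.preconnected a v
  refine ⟨(r.append (c.append r.reverse)).append w, ?_⟩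
  simp only [Walk.length_append, Walk.length_reverse]
  rw [Nat.not_even_iff_odd] at hw
  have hr : Even (r.length + r.length) := ⟨r.length, rfl⟩
  rw [show r.length + (c.length + r.length) + w.length
    = (r.length + r.length) + (c.length + w.length) by ring]
  exact hr.add (hc.add_odd hw)

lemma not_colorable_two_of_adj (hH : ∀ x y, EvenlyReachable H x y) {x y : α}
    (hxy : H.Adj x y) : ¬ H.Colorable 2 := by
  rw [two_colorable_iff_forall_loop_even]
  obtain ⟨p, hp⟩ := hH y x
  intro h
  have := h x (Walk.cons hxy p)
  rw [Walk.length_cons, Nat.even_add_one] at this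
  exact this hp

end Parity

section Polygraph

variable {G : SimpleGraph V} {S : Multiset ℕ}

lemma polygraph_adj_of_dist (hS : ∃ s ∈ S, 0 < s) {x y : Fin (Multiset.card S) → V}
    (h : Multiset.map (fun i => G.dist (x i) (y i)) univ.val = S) : (polygraph G S).Adj x y := by
  refine ⟨?_, h⟩
  rintro rfl
  obtain ⟨s, hs, hpos⟩ := hS
  rw [← h] at hs
  obtain ⟨i, -, hi⟩ := Multiset.mem_map.1 hs
  rw [dist_self] at hi
  omega

lemma exists_map_univ_eq_of_pos (hS : ∃ s ∈ S, 0 < s) (i₀ : Fin (Multiset.card S)) :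
    ∃ g : Fin (Multiset.card S) → ℕ, Multiset.map g univ.val = S ∧ 0 < g i₀ := by
  obtain ⟨s, hs, hpos⟩ := hS
  let e : S ≃ Fin (Multiset.card S) := Fintype.equivFinOfCardEq (by simp)
  have hf : Multiset.map (fun i => (e.symm i).fst) univ.val = S := by
    conv_rhs => rw [← Multiset.map_univ_coe S, ← Multiset.map_univ_val_equiv e.symm,
      Multiset.map_map]
    rfl
  obtain ⟨j, -, hj⟩ := Multiset.mem_map.1 (hf.symm ▸ hs)
  refine ⟨fun i => (e.symm (Equiv.swap i₀ j i)).fst, ?_, by simpa [hj] using hpos⟩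
  change Multiset.map ((fun i => (e.symm i).fst) ∘ Equiv.swap i₀ j) univ.val = S
  rwa [← Multiset.map_map, Multiset.map_univ_val_equiv]

variable (hdeg : ∀ v a b : V, ∃ x, G.Adj v x ∧ x ≠ a ∧ x ≠ b) (hS : ∃ s ∈ S, 0 < s)
  (hg : ((2 * S.sup : ℕ) : ℕ∞) < G.egirth)
include hdeg hS hg

/-- The middle tuple sits at the prescribed distances from both ends, with a positive entry of `S`
placed at the moving coordinate. -/
lemma exists_polygraph_adj_adj {x x' : Fin (Multiset.card S) → V} {i₀ : Fin (Multiset.card S)}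
    (hxx' : ∀ i ≠ i₀, x i = x' i) {m : V} (hm : G.Adj (x i₀) m) (hm' : G.Adj (x' i₀) m) :
    ∃ y, (polygraph G S).Adj x y ∧ (polygraph G S).Adj y x' := by
  obtain ⟨g, hgS, hpos⟩ := exists_map_univ_eq_of_pos hS i₀
  have hgirth : ∀ i, ((2 * g i : ℕ) : ℕ∞) < G.egirth := fun i => by
    have : g i ≤ S.sup := Multiset.le_sup (hgS ▸ Multiset.mem_map_of_mem g (mem_univ_val i))
    exact lt_of_le_of_lt (by exact_mod_cast (by omega : 2 * g i ≤ 2 * S.sup)) hg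
  have hy : ∀ i, ∃ w, G.dist (x i) w = g i ∧ G.dist (x' i) w = g i := by
    intro i
    by_cases hi : i = i₀
    · subst hi
      exact exists_dist_eq_dist_eq hdeg hm hm' hpos (hgirth i)
    · obtain ⟨w, hw⟩ := exists_dist_eq hdeg (x i) (hgirth i)
      exact ⟨w, hw, hxx' i hi ▸ hw⟩
  choose y hxy hx'y using hy
  refine ⟨y, polygraph_adj_of_dist hS ?_, polygraph_adj_of_dist hS ?_⟩
  · simpa [hxy] using hgS
  · simpa [SimpleGraph.dist_comm, hx'y] using hgS

lemma evenlyReachable_polygraph_update {a b : V} (hab : EvenlyReachable G a b)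
    (i : Fin (Multiset.card S)) (x : Fin (Multiset.card S) → V) :
    EvenlyReachable (polygraph G S) (Function.update x i a) (Function.update x i b) := by
  refine EvenlyReachable.induction
    (Q := fun a b => ∀ x, EvenlyReachable (polygraph G S) (Function.update x i a)
      (Function.update x i b)) (fun _ _ => EvenlyReachable.refl _) ?_ hab x
  intro a m c b ham hmc ih x
  obtain ⟨y, hxy, hyx'⟩ := exists_polygraph_adj_adj hdeg hS hg
    (x := Function.update x i a) (x' := Function.update x i c) (i₀ := i)
    (fun j hj => by simp [hj]) (by simpa using ham) (by simpa using hmc.symm)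
  exact (EvenlyReachable.of_adj_adj hxy hyx').trans (ih x)

lemma evenlyReachable_polygraph (hconn : G.Connected) (hnb : ¬ G.Colorable 2)
    (x y : Fin (Multiset.card S) → V) : EvenlyReachable (polygraph G S) x y := by
  have key (T : Finset (Fin (Multiset.card S))) :
      EvenlyReachable (polygraph G S) x (T.piecewise y x) := by
    induction T using Finset.induction_on with
    | empty => simpa using EvenlyReachable.refl x
    | insert i T _ ih =>
      rw [piecewise_insert]
      refine ih.trans ?_
      simpa using evenlyReachable_polygraph_update hdeg hS hg
        (evenlyReachable_of_not_colorable_two hconn hnb (T.piecewise y x i) (y i)) i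
        (T.piecewise y x)
  simpa using key univ

end Polygraph

theorem statement8 (d : ℕ) (hd : 3 ≤ d) (S : Multiset ℕ) (hS : ∃ s ∈ S, 0 < s)
    {V : Type} [Fintype V] (G : SimpleGraph V)
    (hconn : G.Connected) (hnb : ¬ G.Colorable 2)
    (hreg : ∀ v, degR G v = d)
    (hgirth : ((3 * S.sup : ℕ) : ℕ∞) < G.egirth) :
    (polygraph G S).Connected ∧ ¬ (polygraph G S).Colorable 2 := by
  have hdeg : ∀ v a b : V, ∃ x, G.Adj v x ∧ x ≠ a ∧ x ≠ b :=
    fun v => exists_adj_ne_ne_of_three_le_degR (hreg v ▸ hd)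
  have hg : ((2 * S.sup : ℕ) : ℕ∞) < G.egirth :=
    lt_of_le_of_lt (by exact_mod_cast (by omega : 2 * S.sup ≤ 3 * S.sup)) hgirth
  have hP := evenlyReachable_polygraph hdeg hS hg hconn hnb
  obtain ⟨v⟩ := hconn.nonempty
  obtain ⟨m, hm, -⟩ := hdeg v v v
  have hcard : 0 < Multiset.card S := Multiset.card_pos_iff_exists_mem.2 (hS.imp fun _ h => h.1)
  obtain ⟨y, hy, -⟩ := exists_polygraph_adj_adj hdeg hS hg (x := fun _ => v) (x' := fun _ => v)
    (i₀ := ⟨0, hcard⟩) (fun _ _ => rfl) hm hm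
  exact ⟨(connected_iff _).2 ⟨fun x y => (hP x y).elim fun p _ => p.reachable, ⟨fun _ => v⟩⟩,
    not_colorable_two_of_adj hP hy⟩

end PaperStmt
end
end

section
/- Let d ≥ 3 and let p^(t) (t ≥ 0) be the Geronimus polynomials for d. Then for every integer t ≥ 1: (1) if α, β are real numbers with |α| < 2·√(d−1) and |β| > 2·√2·√(d−1), then |p^(t)(β)| > |p^(t)(α)|; and (2) if x is a real number with |x| ≥ 2·√(d−1), then |p^(t)(x)| ≤ |x|^t. -/
open scoped Classical
open Finset Polynomial

noncomputable section

namespace PaperStmt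

variable {V : Type}

private lemma ger_succ3 (d : ℕ) (n : ℕ) (x : ℝ) :
    geronimus d (n+3) x = x * geronimus d (n+2) x - ((d:ℝ) - 1) * geronimus d (n+1) x := rfl

private lemma ger_zero (d : ℕ) (x : ℝ) : geronimus d 0 x = 1 := rfl
private lemma ger_one (d : ℕ) (x : ℝ) : geronimus d 1 x = x := rfl
private lemma ger_two (d : ℕ) (x : ℝ) : geronimus d 2 x = x^2 - d := rfl

private lemma ger_neg (d : ℕ) (x : ℝ) : ∀ t, geronimus d t (-x) = (-1)^t * geronimus d t x := by
  intro t
  induction t using Nat.strong_induction_on with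
  | _ t ih =>
    match t with
    | 0 => simp [ger_zero]
    | 1 => simp [ger_one]
    | 2 => rw [ger_two, ger_two]; ring
    | (n+3) =>
      rw [ger_succ3, ger_succ3, ih (n+2) (by omega), ih (n+1) (by omega)]
      ring

private lemma outside_basic (d : ℕ) (hd : 3 ≤ d) (x : ℝ)
    (hx : 2 * Real.sqrt ((d:ℝ) - 1) ≤ x) (n : ℕ) :
    0 < geronimus d n x ∧ (x/2) * geronimus d n x ≤ geronimus d (n+1) x := by
  have hq : (2:ℝ) ≤ (d:ℝ) - 1 := by
    have : (3:ℝ) ≤ (d:ℝ) := by exact_mod_cast hd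
    linarith
  set q : ℝ := (d:ℝ) - 1 with hqdef
  set u : ℝ := Real.sqrt q with hudef
  have hu2 : u^2 = q := Real.sq_sqrt (by linarith)
  have hupos : 0 < u := Real.sqrt_pos.2 (by linarith)
  have hxpos : 0 < x := lt_of_lt_of_le (by positivity) hx
  have hx2 : 4*q ≤ x^2 := by nlinarith [mul_le_mul_of_nonneg_left hx hupos.le]
  have hdq : (d:ℝ) = q + 1 := by rw [hqdef]; ring
  induction n with
  | zero =>
    rw [ger_zero, ger_one]
    constructor
    · norm_num
    · linarith
  | succ n ih =>
    obtain ⟨h0, h1⟩ := ih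
    have hp1 : 0 < geronimus d (n+1) x := lt_of_lt_of_le (by positivity) h1
    refine ⟨hp1, ?_⟩
    match n with
    | 0 =>
      rw [ger_one, ger_two]
      nlinarith
    | (m+1) =>
      rw [ger_succ3]
      have h1' : x / 2 * geronimus d (m + 1) x ≤ geronimus d (m + 2) x := h1
      have hp1' : 0 < geronimus d (m + 2) x := hp1
      show x / 2 * geronimus d (m + 2) x ≤ _
      nlinarith [mul_le_mul_of_nonneg_left h1' hxpos.le,
        mul_le_mul_of_nonneg_right hx2 h0.le]

private lemma outside_upper (d : ℕ) (hd : 3 ≤ d) (x : ℝ)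
    (hx : 2 * Real.sqrt ((d:ℝ) - 1) ≤ x) (n : ℕ) :
    geronimus d n x ≤ x^n ∧ geronimus d (n+1) x ≤ x^(n+1) := by
  have hq : (2:ℝ) ≤ (d:ℝ) - 1 := by
    have : (3:ℝ) ≤ (d:ℝ) := by exact_mod_cast hd
    linarith
  have hxpos : 0 < x :=
    lt_of_lt_of_le (by positivity : (0:ℝ) < 2 * Real.sqrt ((d:ℝ)-1) + 0) (by
      have := Real.sqrt_pos.2 (by linarith : (0:ℝ) < (d:ℝ)-1); linarith)
  induction n with
  | zero => rw [ger_zero, ger_one]; norm_num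
  | succ n ih =>
    obtain ⟨h0, h1⟩ := ih
    refine ⟨h1, ?_⟩
    match n with
    | 0 =>
      rw [ger_two]
      have hd0 : (0:ℝ) ≤ (d:ℝ) := by positivity
      have : x ^ (0+1+1) = x^2 := by ring
      rw [this]
      linarith
    | (m+1) =>
      rw [ger_succ3]
      have hpos := (outside_basic d hd x hx (m+1)).1
      have h1' : geronimus d (m+2) x ≤ x^(m+2) := h1
      have e : x^(m+3) = x * x^(m+2) := by ring
      show x * geronimus d (m+2) x - ((d:ℝ)-1) * geronimus d (m+1) x ≤ x^(m+1+1+1)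
      have e2 : x^(m+1+1+1) = x * x^(m+2) := by ring
      rw [e2]
      nlinarith [mul_le_mul_of_nonneg_left h1' hxpos.le]

private lemma ger_abs (d : ℕ) (hd : 3 ≤ d) (x : ℝ)
    (hx : 2 * Real.sqrt ((d:ℝ)-1) ≤ |x|) (t : ℕ) :
    |geronimus d t x| = geronimus d t |x| := by
  have hpos : 0 < geronimus d t |x| := (outside_basic d hd |x| hx t).1
  rcases le_or_gt 0 x with h | h
  · rw [abs_of_nonneg h] at hpos ⊢
    exact abs_of_pos hpos
  · have hneg : geronimus d t x = (-1)^t * geronimus d t (-x) := by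
      have := ger_neg d (-x) t
      rw [neg_neg] at this
      rw [this]
    rw [abs_of_neg h] at hpos ⊢
    rw [hneg, abs_mul, abs_pow, abs_neg, abs_one, one_pow, one_mul, abs_of_pos hpos]

private lemma inside_bound (d : ℕ) (hd : 3 ≤ d) (x : ℝ)
    (hx : |x| ≤ 2 * Real.sqrt ((d:ℝ) - 1)) (n : ℕ) :
    |geronimus d (n+1) x| ≤ ((1 + Real.sqrt 2) * Real.sqrt ((d:ℝ) - 1))^(n+1) ∧
    |geronimus d (n+2) x| ≤ ((1 + Real.sqrt 2) * Real.sqrt ((d:ℝ) - 1))^(n+2) := by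
  have hq : (2:ℝ) ≤ (d:ℝ) - 1 := by
    have : (3:ℝ) ≤ (d:ℝ) := by exact_mod_cast hd
    linarith
  set q : ℝ := (d:ℝ) - 1 with hqdef
  set u : ℝ := Real.sqrt q with hudef
  set s : ℝ := Real.sqrt 2 with hsdef
  have hu2 : u^2 = q := Real.sq_sqrt (by linarith)
  have hupos : 0 < u := Real.sqrt_pos.2 (by linarith)
  have hs2 : s^2 = 2 := Real.sq_sqrt (by norm_num)
  have hs1 : 1 ≤ s := by nlinarith [Real.sqrt_nonneg 2]
  set B : ℝ := (1 + s) * u with hBdef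
  have hBpos : 0 < B := by positivity
  have hdq : (d:ℝ) = q + 1 := by rw [hqdef]; ring
  have hx2 : x^2 ≤ 4*q := by
    nlinarith [sq_abs x, mul_self_le_mul_self (abs_nonneg x) hx]
  have hB2 : B^2 = (3 + 2*s)*q := by
    rw [hBdef]; linear_combination (1+s)^2 * hu2 + q * hs2
  have base1 : |geronimus d 1 x| ≤ B^1 := by
    rw [ger_one, pow_one, hBdef]
    nlinarith [abs_nonneg x, sq_abs x]
  have base2 : |geronimus d 2 x| ≤ B^2 := by
    rw [ger_two, hB2, abs_le]
    constructor
    · nlinarith [sq_nonneg x]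
    · nlinarith
  induction n with
  | zero => exact ⟨base1, base2⟩
  | succ n ih =>
    obtain ⟨h1, h2⟩ := ih
    refine ⟨h2, ?_⟩
    show |geronimus d (n+3) x| ≤ B^(n+3)
    rw [ger_succ3]
    have habs : |x * geronimus d (n+2) x - ((d:ℝ)-1) * geronimus d (n+1) x| ≤
        |x| * |geronimus d (n+2) x| + q * |geronimus d (n+1) x| := by
      calc |x * geronimus d (n+2) x - ((d:ℝ)-1) * geronimus d (n+1) x|
          ≤ |x * geronimus d (n+2) x| + |((d:ℝ)-1) * geronimus d (n+1) x| := abs_sub _ _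
        _ = |x| * |geronimus d (n+2) x| + q * |geronimus d (n+1) x| := by
            rw [abs_mul, abs_mul, abs_of_nonneg (by linarith : (0:ℝ) ≤ (d:ℝ)-1)]
    have hstep : |x| * |geronimus d (n+2) x| + q * |geronimus d (n+1) x| ≤
        2*u * B^(n+2) + q * B^(n+1) := by
      have m1 : |x| * |geronimus d (n+2) x| ≤ (2*u) * B^(n+2) :=
        mul_le_mul hx h2 (abs_nonneg _) (by positivity)
      have m2 : q * |geronimus d (n+1) x| ≤ q * B^(n+1) :=
        mul_le_mul_of_nonneg_left h1 (by linarith)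
      linarith
    have heq : 2*u * B^(n+2) + q * B^(n+1) = B^(n+3) := by
      have e2 : B^(n+2) = B * B^(n+1) := by ring
      have e3 : B^(n+3) = B^2 * B^(n+1) := by ring
      rw [e2, e3, hB2, hBdef]
      linear_combination (2 * (1+s) * B^(n+1)) * hu2
    linarith

private lemma outside_strict (d : ℕ) (hd : 3 ≤ d) (x : ℝ)
    (hx : 2 * Real.sqrt 2 * Real.sqrt ((d:ℝ)-1) < x) (n : ℕ) :
    ((1+Real.sqrt 2) * Real.sqrt ((d:ℝ)-1))^(n+1) < geronimus d (n+1) x ∧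
    ((1+Real.sqrt 2) * Real.sqrt ((d:ℝ)-1))^n * ((3+2*Real.sqrt 2)*((d:ℝ)-1) - 1) ≤
      geronimus d (n+2) x - (Real.sqrt 2 - 1) * Real.sqrt ((d:ℝ)-1) * geronimus d (n+1) x := by
  have hq : (2:ℝ) ≤ (d:ℝ) - 1 := by
    have : (3:ℝ) ≤ (d:ℝ) := by exact_mod_cast hd
    linarith
  set q : ℝ := (d:ℝ) - 1 with hqdef
  set u : ℝ := Real.sqrt q with hudef
  set s : ℝ := Real.sqrt 2 with hsdef
  have hu2 : u^2 = q := Real.sq_sqrt (by linarith)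
  have hupos : 0 < u := Real.sqrt_pos.2 (by linarith)
  have hs2 : s^2 = 2 := Real.sq_sqrt (by norm_num)
  have hs1 : 1 < s := by nlinarith [Real.sqrt_nonneg 2]
  set B : ℝ := (1 + s) * u with hBdef
  set w : ℝ := (s - 1) * u with hwdef
  have hBpos : 0 < B := by positivity
  have hwpos : 0 < w := by rw [hwdef]; exact mul_pos (by linarith) hupos
  have hwB : w * B = q := by rw [hwdef, hBdef]; linear_combination u^2 * hs2 + hu2
  have hB2 : B^2 = (3 + 2*s)*q := by rw [hBdef]; linear_combination (1+s)^2 * hu2 + q * hs2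
  have hdq : (d:ℝ) = q + 1 := by rw [hqdef]; ring
  have hx2u : 2 * u ≤ x := by nlinarith
  have pos : ∀ k, 0 < geronimus d k x := fun k => (outside_basic d hd x hx2u k).1
  have hxw : B ≤ x - w := by rw [hBdef, hwdef]; nlinarith
  induction n with
  | zero =>
    constructor
    · rw [pow_one, ger_one, hBdef]; nlinarith
    · rw [pow_zero, ger_one, ger_two, one_mul]
      have h1 : (0:ℝ) ≤ x - 2*s*u := by linarith
      have h2 : (0:ℝ) ≤ x - (s-1)*u := by nlinarith
      have h3 : (0:ℝ) ≤ 2*s*u := by positivity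
      rw [hwdef, hdq]
      nlinarith [mul_nonneg h1 h2, mul_nonneg h1 h3]
  | succ n ih =>
    obtain ⟨hP1, hP2⟩ := ih
    have hBn : (0:ℝ) < B^n := pow_pos hBpos n
    have e1 : B^(n+1) = B^n * B := by ring
    have e2 : B^(n+2) = B^n * B^2 := by ring
    have c1 : w * B^(n+1) = q * B^n := by rw [e1]; linear_combination B^n * hwB
    have hp1 := pos (n+1)
    have hp2 := pos (n+2)
    constructor
    · show B^(n+1+1) < geronimus d (n+2) x
      have m : w * B^(n+1) < w * geronimus d (n+1) x := by
        exact mul_lt_mul_of_pos_left hP1 hwpos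
      nlinarith [mul_pos hBn (by linarith : (0:ℝ) < q - 1)]
    · show B^(n+1) * ((3+2*s)*q - 1) ≤
        geronimus d (n+3) x - w * geronimus d (n+2) x
      rw [ger_succ3, ← hqdef]
      have m1 : B * geronimus d (n+2) x ≤ (x - w) * geronimus d (n+2) x :=
        mul_le_mul_of_nonneg_right hxw hp2.le
      have m2 : B * (B^n * ((3+2*s)*q - 1)) ≤
          B * (geronimus d (n+2) x - w * geronimus d (n+1) x) :=
        mul_le_mul_of_nonneg_left hP2 hBpos.le
      have m2' : B * (B^n * ((3+2*s)*q - 1)) ≤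
          B * geronimus d (n+2) x - q * geronimus d (n+1) x := by
        have c2 : B * (geronimus d (n+2) x - w * geronimus d (n+1) x)
            = B * geronimus d (n+2) x - q * geronimus d (n+1) x := by
          linear_combination (-(geronimus d (n+1) x)) * hwB
        linarith [m2, c2.le, c2.ge]
      have m1' : B * geronimus d (n+2) x ≤ x * geronimus d (n+2) x - w * geronimus d (n+2) x := by
        have : (x - w) * geronimus d (n+2) x = x * geronimus d (n+2) x - w * geronimus d (n+2) x := by ring
        linarith [m1, this.le, this.ge]
      have e1K : B^(n+1) * ((3+2*s)*q - 1) = B * (B^n * ((3+2*s)*q - 1)) := by ring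
      linarith


theorem statement9 (d : ℕ) (hd : 3 ≤ d) (t : ℕ) (ht : 1 ≤ t) :
    (∀ α β : ℝ, |α| < 2 * Real.sqrt ((d : ℝ) - 1) →
      2 * Real.sqrt 2 * Real.sqrt ((d : ℝ) - 1) < |β| →
      |geronimus d t α| < |geronimus d t β|) ∧
    (∀ x : ℝ, 2 * Real.sqrt ((d : ℝ) - 1) ≤ |x| → |geronimus d t x| ≤ |x| ^ t) := by
  obtain ⟨n, rfl⟩ : ∃ n, t = n + 1 := ⟨t - 1, by omega⟩
  have hq : (2:ℝ) ≤ (d:ℝ) - 1 := by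
    have : (3:ℝ) ≤ (d:ℝ) := by exact_mod_cast hd
    linarith
  have hupos : 0 < Real.sqrt ((d:ℝ)-1) := Real.sqrt_pos.2 (by linarith)
  have hs1 : 1 ≤ Real.sqrt 2 := by
    nlinarith [Real.sqrt_nonneg 2, Real.sq_sqrt (by norm_num : (0:ℝ) ≤ 2)]
  constructor
  · intro α β hα hβ
    have h2u : 2 * Real.sqrt ((d:ℝ)-1) ≤ |β| := by nlinarith
    have h1 : |geronimus d (n+1) α| ≤ ((1+Real.sqrt 2) * Real.sqrt ((d:ℝ)-1))^(n+1) :=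
      (inside_bound d hd α hα.le n).1
    have h2 := (outside_strict d hd |β| hβ n).1
    have h3 : |geronimus d (n+1) β| = geronimus d (n+1) |β| := ger_abs d hd β h2u (n+1)
    rw [h3]
    exact lt_of_le_of_lt h1 h2
  · intro x hx
    rw [ger_abs d hd x hx (n+1)]
    exact (outside_upper d hd |x| hx n).2


end PaperStmt
end
end
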